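/- arXiv:2410.06378 — 5 statements merged into one kernel-verified Lean document; each statement's English description precedes it below -/
import Mathlib

section
/- For every p ∈ [1,∞], all d, W, L, b ∈ ℕ with W ≥ d, and every B ∈ ℝ_+ with B ≥ 1, the set R_{[−B,B]∩2^{−b}ℤ}(d,W,L) of realizations of ReLU networks whose weights all lie in [−B,B] ∩ 2^{−b}ℤ is an (L (W+1)^L B^{L−1} 2^{−b})-covering of R(d,W,L,B) with respect to the L^p([0,1]^d)-norm; that is, for every f ∈ R(d,W,L,B) there exists g ∈ R_{[−B,B]∩2^{−b}ℤ}(d,W,L) with ‖f − g‖_{L^p([0,1]^d)} ≤ L (W+1)^L B^{L−1} 2^{−b}. -/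
/-!
Round every weight toward zero onto the grid `2^{-b}ℤ`: this keeps it in `[-B, B]` and moves
it by at most `ε = 2^{-b}`. For inputs in the cube, the values after `i` affine layers are
bounded by `(B(W+1))^i`; since the ReLU is 1-Lipschitz, the errors `e_i` between the two
networks obey `e_{i+1} ≤ W (ε (B(W+1))^i + B e_i) + ε`, whence
`e_i ≤ i (W+1)^i B^{i-1} ε`. A uniform bound on the cube, which has measure one, bounds
every `L^p` distance.
-/

open MeasureTheory ProbabilityTheory ENNReal

noncomputable section

/-- A ReLU network configuration with input dimension `d`:
a finite sequence of matrix–vector pairs `(A_i, b_i)`, `i = 0, …, depth − 1`. -/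
structure ReLUNet (d : ℕ) where
  depth : ℕ
  depth_pos : 0 < depth
  width : ℕ → ℕ
  width_in : width 0 = d
  width_out : width depth = 1
  A : ∀ i : ℕ, Matrix (Fin (width (i + 1))) (Fin (width i)) ℝ
  b : ∀ i : ℕ, Fin (width (i + 1)) → ℝ

namespace ReLUNet

variable {d : ℕ}

/-- The affine map `x ↦ A_i x + b_i` of layer `i`. -/
def layer (Φ : ReLUNet d) (i : ℕ) (x : Fin (Φ.width i) → ℝ) :
    Fin (Φ.width (i + 1)) → ℝ :=
  fun j => (∑ k, Φ.A i j k * x k) + Φ.b i j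

/-- Output after the first `i` affine layers, with the ReLU activation `ρ(x) = max{x,0}`
applied between consecutive affine layers (not on the input and not after the last
affine layer). -/
def forward (Φ : ReLUNet d) : (i : ℕ) → (Fin (Φ.width 0) → ℝ) → Fin (Φ.width i) → ℝ
  | 0, x => x
  | i + 1, x =>
      Φ.layer i fun k => if i = 0 then Φ.forward i x k else max (Φ.forward i x k) 0

/-- The realization `R(Φ) : ℝ^d → ℝ` of a network configuration. -/
def realization (Φ : ReLUNet d) (x : Fin d → ℝ) : ℝ :=
  Φ.forward Φ.depth (fun k => x (Fin.cast Φ.width_in k)) (Fin.cast Φ.width_out.symm 0)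

/-- All layer widths are at most `W`. -/
def widthLe (Φ : ReLUNet d) (W : ℕ) : Prop :=
  ∀ i ≤ Φ.depth, Φ.width i ≤ W

/-- All weights have absolute value at most `B`. -/
def magLe (Φ : ReLUNet d) (B : ℝ) : Prop :=
  ∀ i < Φ.depth, (∀ j k, |Φ.A i j k| ≤ B) ∧ ∀ j, |Φ.b i j| ≤ B

/-- All weights take values in the set `𝔸`. -/
def coefIn (Φ : ReLUNet d) (𝔸 : Set ℝ) : Prop :=
  ∀ i < Φ.depth, (∀ j k, Φ.A i j k ∈ 𝔸) ∧ ∀ j, Φ.b i j ∈ 𝔸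

open Classical in
/-- The connectivity (total number of nonzero weights) of a network configuration. -/
def connectivity (Φ : ReLUNet d) : ℕ :=
  ∑ i ∈ Finset.range Φ.depth,
    ((Finset.univ.filter fun jk : Fin (Φ.width (i + 1)) × Fin (Φ.width i) =>
        Φ.A i jk.1 jk.2 ≠ 0).card
      + (Finset.univ.filter fun j : Fin (Φ.width (i + 1)) => Φ.b i j ≠ 0).card)

end ReLUNet

/-- `R(d,W,L,B)`: realizations of ReLU networks with input dimension `d`, output
dimension 1, width at most `W`, depth at most `L`, and weight magnitude at most `B`. -/
def RclassB (d W L : ℕ) (B : ℝ) : Set ((Fin d → ℝ) → ℝ) :=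
  {f | ∃ Φ : ReLUNet d, Φ.widthLe W ∧ Φ.depth ≤ L ∧ Φ.magLe B ∧ Φ.realization = f}

/-- `R(d,W,L)`: realizations with width at most `W` and depth at most `L`,
with no constraint on the weight magnitude. -/
def Rclass (d W L : ℕ) : Set ((Fin d → ℝ) → ℝ) :=
  {f | ∃ Φ : ReLUNet d, Φ.widthLe W ∧ Φ.depth ≤ L ∧ Φ.realization = f}

/-- `R_𝔸(d,W,L)`: realizations with width at most `W`, depth at most `L`, and all
weights taking values in `𝔸`. -/
def RclassCoef (d W L : ℕ) (𝔸 : Set ℝ) : Set ((Fin d → ℝ) → ℝ) :=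
  {f | ∃ Φ : ReLUNet d, Φ.widthLe W ∧ Φ.depth ≤ L ∧ Φ.coefIn 𝔸 ∧ Φ.realization = f}

/-- `R(d,W,L,B,s)`: realizations with width ≤ `W`, depth ≤ `L`, weight magnitude ≤ `B`,
and connectivity ≤ `s`. -/
def RclassSparse (d W L : ℕ) (B : ℝ) (s : ℕ) : Set ((Fin d → ℝ) → ℝ) :=
  {f | ∃ Φ : ReLUNet d, Φ.widthLe W ∧ Φ.depth ≤ L ∧ Φ.magLe B ∧
    Φ.connectivity ≤ s ∧ Φ.realization = f}

/-- The unit cube `[0,1]^d`. -/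
def unitCube (d : ℕ) : Set (Fin d → ℝ) := Set.univ.pi fun _ => Set.Icc (0 : ℝ) 1

/-- The `L^p([0,1]^d)` distance between two functions on `ℝ^d` (with `p = ⊤`
corresponding to `L^∞`). -/
def cubeDist (d : ℕ) (p : ℝ≥0∞) (f g : (Fin d → ℝ) → ℝ) : ℝ≥0∞ :=
  eLpNorm (f - g) p (volume.restrict (unitCube d))

/-- The `L^p([0,1])` distance between two functions on `ℝ`. -/
def intervalDist (p : ℝ≥0∞) (f g : ℝ → ℝ) : ℝ≥0∞ :=
  eLpNorm (f - g) p (volume.restrict (Set.Icc (0 : ℝ) 1))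

/-- The `ε`-covering number of `X` with respect to the extended distance `δ`:
the cardinality of a smallest subset `C ⊆ X` such that every point of `X` is within
distance `ε` of some point of `C` (equal to `⊤` if no finite covering exists). -/
def coveringNumber {α : Type*} (ε : ℝ≥0∞) (X : Set α) (δ : α → α → ℝ≥0∞) : ℕ∞ :=
  sInf {n : ℕ∞ | ∃ C : Finset α, ↑C ⊆ X ∧ (∀ x ∈ X, ∃ c ∈ C, δ x c ≤ ε) ∧ (C.card : ℕ∞) = n}

/-- The `ε`-packing number of `X` with respect to the extended distance `δ`:
the cardinality of a largest subset of `X` whose points have pairwise distances `> ε`. -/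
def packingNumber {α : Type*} (ε : ℝ≥0∞) (X : Set α) (δ : α → α → ℝ≥0∞) : ℕ∞ :=
  sSup {n : ℕ∞ | ∃ C : Finset α, ↑C ⊆ X ∧
    (∀ x ∈ C, ∀ y ∈ C, x ≠ y → ε < δ x y) ∧ (C.card : ℕ∞) = n}

/-- Base-2 logarithm of an extended natural number, valued in `ℝ≥0∞`. -/
def elog2 (n : ℕ∞) : ℝ≥0∞ :=
  if n = ⊤ then ⊤ else ENNReal.ofReal (Real.logb 2 (n.toNat : ℝ))

/-- The minimax approximation error `A(G, F, δ) = sup_{g ∈ G} inf_{f ∈ F} δ(f, g)`. -/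
def minimaxErr {α : Type*} (G F : Set α) (δ : α → α → ℝ≥0∞) : ℝ≥0∞ :=
  ⨆ g ∈ G, ⨅ f ∈ F, δ f g

/-- The set `[−B, B] ∩ 2^{−b}ℤ` of `b`-bit quantized weights of magnitude at most `B`. -/
def quantSet (B : ℝ) (b : ℕ) : Set ℝ :=
  {x | x ∈ Set.Icc (-B) B ∧ ∃ k : ℤ, x = (k : ℝ) * (2 : ℝ) ^ (-(b : ℤ))}

def truncToInt (y : ℝ) : ℤ := if 0 ≤ y then ⌊y⌋ else ⌈y⌉

lemma abs_truncToInt_le (y : ℝ) : |(truncToInt y : ℝ)| ≤ |y| := by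
  unfold truncToInt
  split_ifs with hy
  · have h0 : (0 : ℝ) ≤ ⌊y⌋ := by exact_mod_cast Int.floor_nonneg.mpr hy
    rw [abs_of_nonneg h0, abs_of_nonneg hy]
    exact Int.floor_le y
  · have hy : y < 0 := not_le.mp hy
    have h0 : (⌈y⌉ : ℝ) ≤ 0 := by exact_mod_cast Int.ceil_le.mpr (by simpa using hy.le)
    rw [abs_of_nonpos h0, abs_of_neg hy]
    linarith [Int.le_ceil y]

lemma abs_truncToInt_sub_le (y : ℝ) : |(truncToInt y : ℝ) - y| ≤ 1 := by
  unfold truncToInt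
  split_ifs
  · rw [abs_le]; constructor <;> linarith [Int.floor_le y, Int.sub_one_lt_floor y]
  · rw [abs_le]; constructor <;> linarith [Int.le_ceil y, Int.ceil_lt_add_one y]

def quantize (b : ℕ) (x : ℝ) : ℝ := truncToInt (x * 2 ^ b) * (2 : ℝ) ^ (-(b : ℤ))

lemma abs_quantize_le (b : ℕ) (x : ℝ) : |quantize b x| ≤ |x| := by
  have h := abs_truncToInt_le (x * 2 ^ b)
  rw [abs_mul, abs_pow, abs_two] at h
  rw [quantize, abs_mul, zpow_neg, zpow_natCast, abs_inv, abs_pow, abs_two]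
  exact (mul_inv_le_iff₀ (by positivity)).2 h

lemma abs_sub_quantize_le (b : ℕ) (x : ℝ) : |x - quantize b x| ≤ (2 : ℝ) ^ (-(b : ℤ)) := by
  have h2 : (0 : ℝ) < 2 ^ b := by positivity
  have h := abs_truncToInt_sub_le (x * 2 ^ b)
  have hx : x - quantize b x = -((truncToInt (x * 2 ^ b) : ℝ) - x * 2 ^ b) * (2 ^ b)⁻¹ := by
    rw [quantize, zpow_neg, zpow_natCast]
    field_simp
    ring
  rw [hx, abs_mul, abs_neg, abs_inv, abs_of_pos h2, zpow_neg, zpow_natCast]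
  exact (mul_le_mul_iff_left₀ (inv_pos.2 h2)).2 h |>.trans_eq (one_mul _)

lemma quantize_mem_quantSet (b : ℕ) {B x : ℝ} (hx : |x| ≤ B) :
    quantize b x ∈ quantSet B b :=
  ⟨abs_le.mp ((abs_quantize_le b x).trans hx), _, rfl⟩

section AffineEstimates

variable {ι : Type*} [Fintype ι]

lemma abs_sum_mul_add_le {a u : ι → ℝ} {c B M : ℝ}
    (ha : ∀ k, |a k| ≤ B) (hu : ∀ k, |u k| ≤ M) (hc : |c| ≤ B) :
    |∑ k, a k * u k + c| ≤ Fintype.card ι * (B * M) + B := by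
  have hterm : ∀ k ∈ Finset.univ, |a k * u k| ≤ B * M := fun k _ => by
    rw [abs_mul]
    exact mul_le_mul (ha k) (hu k) (abs_nonneg _) ((abs_nonneg _).trans (ha k))
  calc |∑ k, a k * u k + c| ≤ ∑ k, |a k * u k| + |c| :=
        (abs_add_le _ _).trans (add_le_add_left (Finset.abs_sum_le_sum_abs _ _) _)
    _ ≤ Fintype.card ι * (B * M) + B := by
        gcongr
        simpa only [nsmul_eq_mul, Finset.card_univ] using Finset.sum_le_card_nsmul _ _ _ hterm

lemma abs_sum_mul_add_sub_le {a a' u u' : ι → ℝ} {c c' B M ε δ : ℝ}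
    (ha' : ∀ k, |a' k| ≤ B) (hu : ∀ k, |u k| ≤ M) (ha : ∀ k, |a k - a' k| ≤ ε)
    (hu' : ∀ k, |u k - u' k| ≤ δ) (hc : |c - c'| ≤ ε) :
    |(∑ k, a k * u k + c) - (∑ k, a' k * u' k + c')|
      ≤ Fintype.card ι * (ε * M + B * δ) + ε := by
  have hterm : ∀ k ∈ Finset.univ, |a k * u k - a' k * u' k| ≤ ε * M + B * δ := fun k _ => by
    rw [show a k * u k - a' k * u' k = (a k - a' k) * u k + a' k * (u k - u' k) by ring]
    refine (abs_add_le _ _).trans (add_le_add ?_ ?_) <;> rw [abs_mul]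
    · exact mul_le_mul (ha k) (hu k) (abs_nonneg _) ((abs_nonneg _).trans (ha k))
    · exact mul_le_mul (ha' k) (hu' k) (abs_nonneg _) ((abs_nonneg _).trans (ha' k))
  calc |(∑ k, a k * u k + c) - (∑ k, a' k * u' k + c')|
        = |∑ k, (a k * u k - a' k * u' k) + (c - c')| := by
          rw [Finset.sum_sub_distrib]; ring_nf
    _ ≤ ∑ k, |a k * u k - a' k * u' k| + |c - c'| :=
        (abs_add_le _ _).trans (add_le_add_left (Finset.abs_sum_le_sum_abs _ _) _)
    _ ≤ Fintype.card ι * (ε * M + B * δ) + ε := by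
        gcongr
        simpa only [nsmul_eq_mul, Finset.card_univ] using Finset.sum_le_card_nsmul _ _ _ hterm

end AffineEstimates

lemma abs_ite_max_sub_le (c : Prop) [Decidable c] (y y' : ℝ) :
    |(if c then y else max y 0) - (if c then y' else max y' 0)| ≤ |y - y'| := by
  split_ifs
  · exact le_rfl
  · exact abs_max_sub_max_le_abs y y' 0

lemma abs_ite_max_le (c : Prop) [Decidable c] (y : ℝ) :
    |if c then y else max y 0| ≤ |y| := by
  simpa using abs_ite_max_sub_le c y 0

lemma error_recursion_le (W i : ℕ) {B ε : ℝ} (hB : 1 ≤ B) (hε : 0 ≤ ε) :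
    W * (ε * (B * (W + 1)) ^ i + B * (i * (W + 1) ^ i * B ^ (i - 1) * ε)) + ε
      ≤ (i + 1) * (W + 1) ^ (i + 1) * B ^ i * ε := by
  have hBi : B * (i * B ^ (i - 1)) = i * B ^ i := by
    cases i with
    | zero => simp
    | succ n => rw [Nat.add_sub_cancel, pow_succ']; push_cast; ring
  have hP : 1 ≤ (W + 1 : ℝ) ^ i * B ^ i :=
    one_le_mul_of_one_le_of_one_le (one_le_pow₀ (by linarith [(W.cast_nonneg : (0 : ℝ) ≤ W)]))
      (one_le_pow₀ hB)
  calc W * (ε * (B * (W + 1)) ^ i + B * (i * (W + 1) ^ i * B ^ (i - 1) * ε)) + ε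
      = W * ((W + 1) ^ i * B ^ i) * (i + 1) * ε + 1 * ε := by
        rw [mul_pow]; linear_combination (W * (W + 1) ^ i * ε) * hBi
    _ ≤ W * ((W + 1) ^ i * B ^ i) * (i + 1) * ε + (i + 1) * ((W + 1) ^ i * B ^ i) * ε := by
        gcongr; nlinarith
    _ = (i + 1) * (W + 1) ^ (i + 1) * B ^ i * ε := by ring

namespace ReLUNet

variable {d : ℕ}

def mapWeights (Φ : ReLUNet d) (q : ℝ → ℝ) : ReLUNet d :=
  { Φ with A := fun i j k => q (Φ.A i j k), b := fun i j => q (Φ.b i j) }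

lemma coefIn_mapWeights {Φ : ReLUNet d} {B : ℝ} {q : ℝ → ℝ} {𝔸 : Set ℝ}
    (hq : ∀ a, |a| ≤ B → q a ∈ 𝔸) (hΦ : Φ.magLe B) : (Φ.mapWeights q).coefIn 𝔸 :=
  fun i hi => ⟨fun j k => hq _ ((hΦ i hi).1 j k), fun j => hq _ ((hΦ i hi).2 j)⟩

variable {Φ : ReLUNet d} {W : ℕ} {B : ℝ}

lemma abs_forward_le (hW : Φ.widthLe W) (hB : 1 ≤ B) (hΦ : Φ.magLe B)
    {x : Fin (Φ.width 0) → ℝ} (hx : ∀ k, |x k| ≤ 1) (i : ℕ) (hi : i ≤ Φ.depth)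
    (j : Fin (Φ.width i)) : |Φ.forward i x j| ≤ (B * (W + 1)) ^ i := by
  induction i with
  | zero => simpa [forward] using hx j
  | succ i ih =>
    obtain ⟨hA, hb⟩ := hΦ i hi
    have hact : ∀ k, |if i = 0 then Φ.forward i x k else max (Φ.forward i x k) 0|
        ≤ (B * (W + 1)) ^ i := fun k =>
      (abs_ite_max_le _ _).trans (ih (Nat.le_of_succ_le hi) k)
    have hM : 1 ≤ (B * (W + 1)) ^ i :=
      one_le_pow₀ (by nlinarith [(W.cast_nonneg : (0 : ℝ) ≤ W)])
    calc |Φ.forward (i + 1) x j| ≤ Φ.width i * (B * (B * (W + 1)) ^ i) + B := by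
          have h := abs_sum_mul_add_le (hA j) hact (hb j)
          rw [Fintype.card_fin] at h
          exact h
      _ ≤ W * (B * (B * (W + 1)) ^ i) + B := by
          gcongr
          exact_mod_cast hW i (Nat.le_of_succ_le hi)
      _ ≤ (B * (W + 1)) ^ (i + 1) := by rw [pow_succ]; nlinarith

lemma abs_forward_sub_forward_mapWeights_le (hW : Φ.widthLe W) (hB : 1 ≤ B) (hΦ : Φ.magLe B)
    {q : ℝ → ℝ} {ε : ℝ} (hq_abs : ∀ a, |a| ≤ B → |q a| ≤ B)
    (hq : ∀ a, |a - q a| ≤ ε) {x : Fin (Φ.width 0) → ℝ} (hx : ∀ k, |x k| ≤ 1) (i : ℕ)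
    (hi : i ≤ Φ.depth) (j : Fin (Φ.width i)) :
    |Φ.forward i x j - (Φ.mapWeights q).forward i x j|
      ≤ i * (W + 1) ^ i * B ^ (i - 1) * ε := by
  have hε : 0 ≤ ε := (abs_nonneg _).trans (hq 0)
  induction i with
  | zero => simp [forward]
  | succ i ih =>
    obtain ⟨hA, hb⟩ := hΦ i hi
    have hact : ∀ k, |if i = 0 then Φ.forward i x k else max (Φ.forward i x k) 0|
        ≤ (B * (W + 1)) ^ i := fun k =>
      (abs_ite_max_le _ _).trans (abs_forward_le hW hB hΦ hx i (Nat.le_of_succ_le hi) k)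
    have hact_sub := fun k =>
      (abs_ite_max_sub_le (i = 0) _ _).trans (ih (Nat.le_of_succ_le hi) k)
    calc |Φ.forward (i + 1) x j - (Φ.mapWeights q).forward (i + 1) x j|
        ≤ Φ.width i * (ε * (B * (W + 1)) ^ i + B * (i * (W + 1) ^ i * B ^ (i - 1) * ε))
            + ε := by
          have h := abs_sum_mul_add_sub_le (fun k => hq_abs _ (hA j k)) hact
            (fun k => hq _) hact_sub (hq (Φ.b i j))
          rw [Fintype.card_fin] at h
          exact h
      _ ≤ W * (ε * (B * (W + 1)) ^ i + B * (i * (W + 1) ^ i * B ^ (i - 1) * ε)) + ε := by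
          gcongr
          exact_mod_cast hW i (Nat.le_of_succ_le hi)
      _ ≤ _ := by exact_mod_cast error_recursion_le W i hB hε

lemma abs_realization_sub_realization_mapWeights_le (hW : Φ.widthLe W) (hB : 1 ≤ B)
    (hΦ : Φ.magLe B) {q : ℝ → ℝ} {ε : ℝ} (hq_abs : ∀ a, |a| ≤ B → |q a| ≤ B)
    (hq : ∀ a, |a - q a| ≤ ε) {x : Fin d → ℝ} (hx : x ∈ unitCube d) :
    |Φ.realization x - (Φ.mapWeights q).realization x|
      ≤ Φ.depth * (W + 1) ^ Φ.depth * B ^ (Φ.depth - 1) * ε :=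
  abs_forward_sub_forward_mapWeights_le hW hB hΦ hq_abs hq
    (fun k => abs_le.2 ⟨by linarith [(hx (Fin.cast Φ.width_in k) (Set.mem_univ _)).1],
      (hx (Fin.cast Φ.width_in k) (Set.mem_univ _)).2⟩)
    _ le_rfl _

end ReLUNet

lemma volume_unitCube (d : ℕ) : volume (unitCube d) = 1 := by
  rw [unitCube, volume_pi_pi]
  simp

lemma cubeDist_le_ofReal {d : ℕ} {p : ℝ≥0∞} {f g : (Fin d → ℝ) → ℝ} {C : ℝ}
    (h : ∀ x ∈ unitCube d, |f x - g x| ≤ C) : cubeDist d p f g ≤ ENNReal.ofReal C := by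
  have hae : ∀ᵐ x ∂volume.restrict (unitCube d), ‖(f - g) x‖ ≤ C :=
    (ae_restrict_mem (MeasurableSet.univ_pi fun _ => measurableSet_Icc)).mono fun x hx => h x hx
  simpa [cubeDist, Measure.restrict_apply_univ, volume_unitCube] using
    eLpNorm_le_of_ae_bound (p := p) hae

theorem quantized_nets_form_covering_general
    (p : ℝ≥0∞) (d W L b : ℕ) (B : ℝ)
    (hB : 1 ≤ B) :
    ∀ f ∈ RclassB d W L B, ∃ g ∈ RclassCoef d W L (quantSet B b),
      cubeDist d p f g
        ≤ ENNReal.ofReal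
            ((L : ℝ) * ((W : ℝ) + 1) ^ L * B ^ (L - 1) * (2 : ℝ) ^ (-(b : ℤ))) := by
  rintro f ⟨Φ, hW, hL, hΦ, rfl⟩
  refine ⟨(Φ.mapWeights (quantize b)).realization,
    ⟨Φ.mapWeights (quantize b), hW, hL,
      ReLUNet.coefIn_mapWeights (fun _ => quantize_mem_quantSet b) hΦ, rfl⟩,
    cubeDist_le_ofReal fun x hx => ?_⟩
  calc |Φ.realization x - (Φ.mapWeights (quantize b)).realization x|
      ≤ Φ.depth * (W + 1) ^ Φ.depth * B ^ (Φ.depth - 1) * (2 : ℝ) ^ (-(b : ℤ)) :=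
        Φ.abs_realization_sub_realization_mapWeights_le hW hB hΦ
          (fun a ha => (abs_quantize_le b a).trans ha) (abs_sub_quantize_le b) hx
    _ ≤ L * (W + 1) ^ L * B ^ (L - 1) * (2 : ℝ) ^ (-(b : ℤ)) := by
        gcongr
        linarith

/-- `R_{[−B,B] ∩ 2^{−b}ℤ}(d,W,L)` is an
`L (W+1)^L B^{L−1} 2^{−b}`-covering of `R(d,W,L,B)` in the `L^p([0,1]^d)`-norm. -/
theorem quantized_nets_form_covering
    (p : ℝ≥0∞) (d W L b : ℕ) (B : ℝ)
    (hp : 1 ≤ p) (hd : 0 < d) (hL : 0 < L) (hW : d ≤ W) (hB : 1 ≤ B) :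
    ∀ f ∈ RclassB d W L B, ∃ g ∈ RclassCoef d W L (quantSet B b),
      cubeDist d p f g
        ≤ ENNReal.ofReal
            ((L : ℝ) * ((W : ℝ) + 1) ^ L * B ^ (L - 1) * (2 : ℝ) ^ (-(b : ℤ))) :=
  quantized_nets_form_covering_general p d W L b B hB
end
end

section
/- For every N ∈ ℕ with N ≥ 2 and all ε, E ∈ ℝ_+, the packing number of the class Σ(X_N, E) of bounded continuous piecewise linear functions with breakpoints X_N = (i/N)_{i=0}^{N} satisfies log M(ε, Σ(X_N, E), L^1([0,1])) ≥ N · log(⌈E/(4εN)⌉). -/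
open MeasureTheory ProbabilityTheory ENNReal

noncomputable section

/-- `Σ(X_N, E)`: bounded continuous piecewise linear functions with breakpoints
`X_N = (i/N)_{i=0}^{N}`: continuous functions `f : ℝ → ℝ` with `‖f‖_{L^∞(ℝ)} ≤ E`,
constant on `(−∞, 0]` and on `[1, ∞)`, and affine on each `[i/N, (i+1)/N]`. -/
def SigmaClass (N : ℕ) (E : ℝ) : Set (ℝ → ℝ) :=
  {f | Continuous f ∧ (∀ x : ℝ, |f x| ≤ E) ∧
    (∀ x ≤ (0 : ℝ), f x = f 0) ∧ (∀ x : ℝ, 1 ≤ x → f x = f 1) ∧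
    ∀ i : ℕ, i < N → ∃ a c : ℝ,
      ∀ x ∈ Set.Icc ((i : ℝ) / N) (((i : ℝ) + 1) / N), f x = a * x + c}

/-!
Encode `σ : Fin N → Fin m`, `m = ⌈E / (4εN)⌉`, as the piecewise linear function with node
values `0, c σ₀, …, c σ_{N-1}` at `0, 1/N, …, 1`, where `c = 4εN`; as `c σᵢ < E`, these lie in
`Σ(X_N, E)`. If `σ ≠ τ`, the node values of the difference vanish at some node `j/N` and are a
nonzero multiple of `c` at the next one, so on `[j/N, (j+1)/N]` the difference is a ramp of
height at least `c`, whose `L¹` norm is at least `c / (2N) = 2ε > ε`. Hence these `m ^ N`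
functions form an `ε`-packing.
-/

open Finset

def clamp01 (t : ℝ) : ℝ := max 0 (min 1 t)

@[fun_prop]
lemma continuous_clamp01 : Continuous clamp01 := by unfold clamp01; fun_prop

lemma clamp01_of_nonpos {t : ℝ} (h : t ≤ 0) : clamp01 t = 0 := by
  rw [clamp01, min_eq_right (h.trans zero_le_one), max_eq_left h]

lemma clamp01_of_one_le {t : ℝ} (h : 1 ≤ t) : clamp01 t = 1 := by
  rw [clamp01, min_eq_left h, max_eq_right zero_le_one]

lemma clamp01_of_mem {t : ℝ} (h₀ : 0 ≤ t) (h₁ : t ≤ 1) : clamp01 t = t := by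
  rw [clamp01, min_eq_right h₁, max_eq_right h₀]

/-- Piecewise linear interpolation of the values `w i` at the nodes `i / N`, constant outside
`[0, 1]`: the `i`-th summand ramps from `0` to `w (i + 1) - w i` across `[i / N, (i + 1) / N]`. -/
def pwInterp (N : ℕ) (w : ℕ → ℝ) (x : ℝ) : ℝ :=
  w 0 + ∑ i ∈ range N, (w (i + 1) - w i) * clamp01 (N * x - i)

section pwInterp

variable {N : ℕ} {w : ℕ → ℝ} {x : ℝ}

lemma continuous_pwInterp : Continuous (pwInterp N w) := by
  unfold pwInterp
  fun_prop

lemma pwInterp_of_nonpos (hx : x ≤ 0) : pwInterp N w x = w 0 := by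
  refine add_eq_left.2 (sum_eq_zero fun i _ => ?_)
  have hNx : (N : ℝ) * x ≤ 0 := mul_nonpos_of_nonneg_of_nonpos N.cast_nonneg hx
  have hi : (0 : ℝ) ≤ i := i.cast_nonneg
  rw [clamp01_of_nonpos (by linarith), mul_zero]

lemma pwInterp_of_one_le (hx : 1 ≤ x) : pwInterp N w x = w N := by
  rw [pwInterp, ← add_sub_cancel (w 0) (w N), ← sum_range_sub]
  refine congrArg _ (sum_congr rfl fun i hi => ?_)
  have hiN : (i : ℝ) + 1 ≤ N := by exact_mod_cast mem_range.1 hi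
  rw [clamp01_of_one_le (by nlinarith), mul_one]

lemma pwInterp_of_mem_piece {j : ℕ} (hj : j < N) (h₁ : j ≤ N * x) (h₂ : N * x ≤ j + 1) :
    pwInterp N w x = w j + (w (j + 1) - w j) * (N * x - j) := by
  have hsplit := sum_range_add_sum_Ico (fun i => (w (i + 1) - w i) * clamp01 (N * x - i)) hj.le
  rw [sum_eq_sum_Ico_succ_bot hj] at hsplit
  have hbelow : ∑ i ∈ range j, (w (i + 1) - w i) * clamp01 (N * x - i) = w j - w 0 := by
    rw [← sum_range_sub]
    refine sum_congr rfl fun i hi => ?_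
    have hij : (i : ℝ) + 1 ≤ j := by exact_mod_cast mem_range.1 hi
    rw [clamp01_of_one_le (by linarith), mul_one]
  have habove : ∑ i ∈ Ico (j + 1) N, (w (i + 1) - w i) * clamp01 (N * x - i) = 0 := by
    refine sum_eq_zero fun i hi => ?_
    have hji : (j : ℝ) + 1 ≤ i := by exact_mod_cast (mem_Ico.1 hi).1
    rw [clamp01_of_nonpos (by linarith), mul_zero]
  rw [pwInterp, ← hsplit, hbelow, habove, clamp01_of_mem (by linarith) (by linarith)]
  ring

lemma exists_mem_piece (hN : 0 < N) (hx₀ : 0 ≤ x) (hx₁ : x ≤ 1) :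
    ∃ j < N, (j : ℝ) ≤ N * x ∧ N * x ≤ j + 1 := by
  have hNx : N * x ≤ N := mul_le_of_le_one_right N.cast_nonneg hx₁
  rcases lt_or_ge ⌊(N : ℝ) * x⌋₊ N with hlt | hge
  · exact ⟨_, hlt, Nat.floor_le (by positivity), (Nat.lt_floor_add_one _).le⟩
  · have hge' : (N : ℝ) ≤ ⌊(N : ℝ) * x⌋₊ := by exact_mod_cast hge
    have hfloor := Nat.floor_le (by positivity : (0 : ℝ) ≤ N * x)
    refine ⟨N - 1, by omega, ?_, ?_⟩ <;> rw [Nat.cast_pred hN] <;> linarith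

lemma abs_pwInterp_le (hN : 0 < N) {E : ℝ} (hw : ∀ i ≤ N, |w i| ≤ E) (x : ℝ) :
    |pwInterp N w x| ≤ E := by
  rcases le_or_gt x 0 with hx₀ | hx₀
  · rw [pwInterp_of_nonpos hx₀]; exact hw 0 (Nat.zero_le _)
  rcases le_or_gt 1 x with hx₁ | hx₁
  · rw [pwInterp_of_one_le hx₁]; exact hw N le_rfl
  obtain ⟨j, hj, h₁, h₂⟩ := exists_mem_piece hN hx₀.le hx₁.le
  set t := N * x - j
  have ht₀ : 0 ≤ 1 - t := by linarith
  have ht₁ : 0 ≤ t := by linarith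
  have hconv : pwInterp N w x = (1 - t) * w j + t * w (j + 1) := by
    rw [pwInterp_of_mem_piece hj h₁ h₂]; ring
  calc |pwInterp N w x| ≤ (1 - t) * |w j| + t * |w (j + 1)| := by
        rw [hconv]
        refine (abs_add_le _ _).trans_eq ?_
        rw [abs_mul, abs_mul, abs_of_nonneg ht₀, abs_of_nonneg ht₁]
    _ ≤ (1 - t) * E + t * E := by
        gcongr
        exacts [hw j hj.le, hw (j + 1) hj]
    _ = E := by ring

lemma pwInterp_mem_sigmaClass (hN : 0 < N) {E : ℝ} (hw : ∀ i ≤ N, |w i| ≤ E) :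
    pwInterp N w ∈ SigmaClass N E := by
  have hN' : (0 : ℝ) < N := by exact_mod_cast hN
  refine ⟨continuous_pwInterp, abs_pwInterp_le hN hw, fun x hx => ?_, fun x hx => ?_,
    fun j hj => ⟨N * (w (j + 1) - w j), w j - (w (j + 1) - w j) * j, fun x hx => ?_⟩⟩
  · rw [pwInterp_of_nonpos hx, pwInterp_of_nonpos le_rfl]
  · rw [pwInterp_of_one_le hx, pwInterp_of_one_le le_rfl]
  · rw [Set.mem_Icc, div_le_iff₀' hN', le_div_iff₀' hN'] at hx
    rw [pwInterp_of_mem_piece hj hx.1 hx.2]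
    ring

lemma pwInterp_sub (w₁ w₂ : ℕ → ℝ) :
    pwInterp N (w₁ - w₂) = pwInterp N w₁ - pwInterp N w₂ := by
  ext x
  simp only [pwInterp, Pi.sub_apply, sub_mul, sum_sub_distrib]
  ring

lemma integral_abs_pwInterp_piece {j : ℕ} (hj : j < N) (hw : w j = 0) :
    ∫ x in (j / N : ℝ)..(j + 1) / N, |pwInterp N w x| = |w (j + 1)| / (2 * N) := by
  have hN : (N : ℝ) ≠ 0 := by exact_mod_cast (Nat.zero_le j).trans_lt hj |>.ne'
  have hpiece : ∀ x ∈ Set.uIcc (j / N : ℝ) ((j + 1) / N),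
      |pwInterp N w x| = |w (j + 1)| * (N * x - j) := by
    intro x hx
    rw [Set.uIcc_of_le (by gcongr; linarith), Set.mem_Icc, div_le_iff₀' (by positivity),
      le_div_iff₀' (by positivity)] at hx
    rw [pwInterp_of_mem_piece hj hx.1 hx.2, hw, zero_add, sub_zero, abs_mul,
      abs_of_nonneg (by linarith : (0 : ℝ) ≤ N * x - j)]
  rw [intervalIntegral.integral_congr hpiece, intervalIntegral.integral_const_mul,
    intervalIntegral.integral_comp_mul_sub (fun x => x) hN, integral_id,
    mul_div_cancel₀ _ hN, mul_div_cancel₀ _ hN]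
  simp only [sub_self, add_sub_cancel_left, smul_eq_mul]
  field_simp
  ring

end pwInterp

lemma intervalDist_self (p : ℝ≥0∞) (f : ℝ → ℝ) : intervalDist p f f = 0 := by
  simp [intervalDist]

lemma ofReal_integral_abs_sub_le_intervalDist {p q : ℝ} (hp : 0 ≤ p) (hpq : p ≤ q)
    (hq : q ≤ 1) (f g : ℝ → ℝ) :
    ENNReal.ofReal (∫ x in p..q, |f x - g x|) ≤ intervalDist 1 f g := by
  rw [intervalIntegral.integral_of_le hpq, intervalDist, eLpNorm_one_eq_lintegral_enorm]
  calc ENNReal.ofReal (∫ x in Set.Ioc p q, |f x - g x|)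
      ≤ ‖∫ x in Set.Ioc p q, |f x - g x|‖ₑ := Real.ofReal_le_enorm _
    _ ≤ ∫⁻ x in Set.Ioc p q, ‖|f x - g x|‖ₑ := enorm_integral_le_lintegral_enorm _
    _ ≤ ∫⁻ x in Set.Icc 0 1, ‖(f - g) x‖ₑ := by
        simp only [Real.enorm_abs, Pi.sub_apply]
        exact lintegral_mono_set (Set.Ioc_subset_Icc_self.trans (Set.Icc_subset_Icc hp hq))

lemma ofReal_le_intervalDist_pwInterp {N j : ℕ} (hj : j < N) {w₁ w₂ : ℕ → ℝ}
    (h : w₁ j = w₂ j) :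
    ENNReal.ofReal (|w₁ (j + 1) - w₂ (j + 1)| / (2 * N))
      ≤ intervalDist 1 (pwInterp N w₁) (pwInterp N w₂) := by
  have hN : (0 : ℝ) < N := by exact_mod_cast (Nat.zero_le j).trans_lt hj
  have hjN : (j : ℝ) + 1 ≤ N := by exact_mod_cast hj
  have hpiece := integral_abs_pwInterp_piece (w := w₁ - w₂) hj (sub_eq_zero.2 h)
  simp only [pwInterp_sub, Pi.sub_apply] at hpiece
  rw [← hpiece]
  exact ofReal_integral_abs_sub_le_intervalDist (by positivity) (by gcongr; linarith)
    ((div_le_one hN).2 hjN) _ _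

lemma card_le_packingNumber {ι α : Type*} [Fintype ι] {ε : ℝ≥0∞} {X : Set α}
    {δ : α → α → ℝ≥0∞} (F : ι → α) (hX : ∀ i, F i ∈ X)
    (hF : Pairwise fun i j => ε < δ (F i) (F j)) (hδ : ∀ x, δ x x = 0) :
    (Fintype.card ι : ℕ∞) ≤ packingNumber ε X δ := by
  classical
  have hinj : Function.Injective F := fun i j hij => by
    by_contra hne
    simpa [hij, hδ] using hF hne
  refine le_sSup ⟨univ.image F, ?_, ?_, by rw [card_image_of_injective _ hinj, card_univ]⟩
  · simpa [Set.range_subset_iff] using hX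
  · simp only [mem_image, mem_univ, true_and]
    rintro _ ⟨i, rfl⟩ _ ⟨j, rfl⟩ hij
    exact hF fun h => hij (congrArg F h)

lemma elog2_natCast (n : ℕ) : elog2 n = ENNReal.ofReal (Real.logb 2 n) := by
  simp [elog2]

lemma elog2_mono : Monotone elog2 := by
  intro a b hab
  induction b using ENat.recTopCoe with
  | top => simp [elog2]
  | coe n =>
    lift a to ℕ using ne_top_of_le_ne_top (ENat.natCast_ne_top n) hab
    rw [Nat.cast_le] at hab
    rw [elog2_natCast, elog2_natCast]
    apply ENNReal.ofReal_le_ofReal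
    rcases Nat.eq_zero_or_pos a with rfl | ha
    · simp only [Nat.cast_zero, Real.logb_zero]
      exact div_nonneg (Real.log_natCast_nonneg n) (Real.log_nonneg one_le_two)
    · exact Real.logb_le_logb_of_le one_lt_two (by exact_mod_cast ha) (by exact_mod_cast hab)

def codeword {N m : ℕ} (σ : Fin N → Fin m) : ℕ → ℕ
  | 0 => 0
  | k + 1 => if h : k < N then σ ⟨k, h⟩ else 0

section codeword

variable {N m : ℕ}

lemma codeword_lt (hm : 0 < m) (σ : Fin N → Fin m) (k : ℕ) : codeword σ k < m := by
  cases k with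
  | zero => exact hm
  | succ k => simp only [codeword]; split <;> simp [hm]

lemma codeword_succ (σ : Fin N → Fin m) (i : Fin N) : codeword σ (i + 1) = σ i := by
  simp [codeword]

lemma codeword_of_lt {σ : Fin N → Fin m} {k : ℕ} (hk : N < k) : codeword σ k = 0 := by
  obtain ⟨k, rfl⟩ := Nat.exists_eq_add_one_of_ne_zero (by omega : k ≠ 0)
  simp [codeword, show ¬ k < N by omega]

lemma exists_codeword_eq_and_succ_ne {σ τ : Fin N → Fin m} (h : σ ≠ τ) :
    ∃ j < N, codeword σ j = codeword τ j ∧ codeword σ (j + 1) ≠ codeword τ (j + 1) := by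
  obtain ⟨i, hi⟩ := Function.ne_iff.1 h
  obtain ⟨j, hj, hj₁⟩ := Nat.exists_not_and_succ_of_not_zero_of_exists
    (p := fun k => codeword σ k ≠ codeword τ k) (by simp [codeword])
    ⟨i + 1, by simpa [codeword_succ] using Fin.val_injective.ne hi⟩
  refine ⟨j, ?_, not_not.1 hj, hj₁⟩
  by_contra! hNj
  exact hj₁ (by rw [codeword_of_lt (by omega), codeword_of_lt (by omega)])

lemma ofReal_le_intervalDist_codeword {σ τ : Fin N → Fin m} {c : ℝ} (hc : 0 ≤ c)
    (h : σ ≠ τ) :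
    ENNReal.ofReal (c / (2 * N))
      ≤ intervalDist 1 (pwInterp N (c * codeword σ ·)) (pwInterp N (c * codeword τ ·)) := by
  obtain ⟨j, hj, heq, hne⟩ := exists_codeword_eq_and_succ_ne h
  refine (ENNReal.ofReal_le_ofReal ?_).trans (ofReal_le_intervalDist_pwInterp hj (by rw [heq]))
  have hdiff : (1 : ℝ) ≤ |(codeword σ (j + 1) : ℝ) - codeword τ (j + 1)| := by
    have hne' : (codeword σ (j + 1) : ℤ) - codeword τ (j + 1) ≠ 0 :=
      sub_ne_zero.2 (by exact_mod_cast hne)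
    exact_mod_cast Int.one_le_abs hne'
  gcongr
  rw [← mul_sub, abs_mul, abs_of_nonneg hc]
  exact le_mul_of_one_le_right hc hdiff

end codeword

/-- Packing number lower bound for bounded continuous piecewise linear
functions: `log M(ε, Σ(X_N, E), L¹([0,1])) ≥ N · log ⌈E/(4εN)⌉`. -/
theorem packing_lower_bound_piecewise_linear
    (N : ℕ) (ε E : ℝ) (hN : 2 ≤ N) (hε : 0 < ε) (hE : 0 < E) :
    ENNReal.ofReal ((N : ℝ) * Real.logb 2 ((⌈E / (4 * ε * N)⌉₊ : ℕ) : ℝ))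
      ≤ elog2 (packingNumber (ENNReal.ofReal ε) (SigmaClass N E) (intervalDist 1)) := by
  have hN₀ : 0 < N := by omega
  set c : ℝ := 4 * ε * N with hc_def
  set m := ⌈E / c⌉₊
  have hc : 0 < c := by positivity
  have hm : 0 < m := Nat.ceil_pos.2 (by positivity)
  let F : (Fin N → Fin m) → ℝ → ℝ := fun σ => pwInterp N (c * codeword σ ·)
  have hF : ∀ σ, F σ ∈ SigmaClass N E := fun σ => pwInterp_mem_sigmaClass hN₀ fun k _ => by
    have hk := (lt_div_iff₀' hc).1 (Nat.lt_ceil.1 (codeword_lt hm σ k))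
    rw [abs_of_nonneg (by positivity)]
    exact hk.le
  have hsep : Pairwise fun σ τ => ENNReal.ofReal ε < intervalDist 1 (F σ) (F τ) := by
    intro σ τ h
    refine lt_of_lt_of_le ?_ (ofReal_le_intervalDist_codeword hc.le h)
    rw [ENNReal.ofReal_lt_ofReal_iff (by positivity), hc_def]
    field_simp
    linarith
  calc ENNReal.ofReal ((N : ℝ) * Real.logb 2 m)
      = elog2 (Fintype.card (Fin N → Fin m)) := by
        rw [Fintype.card_fun, Fintype.card_fin, Fintype.card_fin, elog2_natCast, Nat.cast_pow,
          Real.logb_pow]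
    _ ≤ _ := elog2_mono (card_le_packingNumber F hF hsep (intervalDist_self 1))
end
end

section
/- Let (X, δ) be a metric space, let F, G ⊆ X, and let ε ∈ ℝ_+. If the minimax approximation error satisfies A(G, F, δ) = sup_{g∈G} inf_{f∈F} δ(f,g) ≤ ε, then the covering numbers satisfy N(ε, F, δ) ≥ N(4ε, G, δ). -/
/-!
Let `C` be an `ε`-cover of `F`. For `g ∈ G` the triangle inequality gives
`infEDist g C ≤ infEDist g F + ε ≤ 2ε`, and since `C` is finite this infimum is attained, so `C`
is a `2ε`-cover of `G` by points that need not lie in `G`. Such an external `2ε`-cover can be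
traded for a `4ε`-cover by points of `G` without increasing its size: a maximal
`4ε`-separated subset of `G` is one, and no two of its points share a point of the external cover.
-/

open ENNReal

noncomputable section

open scoped NNReal
open Metric (infEDist IsCover externalCoveringNumber)

section

variable {X : Type*} [PseudoEMetricSpace X]

theorem coveringNumber_edist_eq (r : ℝ≥0) (A : Set X) :
    coveringNumber r A (fun a b => edist a b) = Metric.coveringNumber r A := by
  apply le_antisymm
  · refine le_iInf fun C => le_iInf fun hCA => le_iInf fun hC => ?_
    obtain hfin | hinf := C.finite_or_infinite
    · refine sInf_le ⟨hfin.toFinset, by simpa using hCA, fun x hx => ?_, ?_⟩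
      · simpa using hC hx
      · simp [hfin.encard_eq_coe_toFinset_card]
    · simp [hinf.encard_eq]
  · refine le_sInf ?_
    rintro n ⟨C, hCA, hC, rfl⟩
    simpa using Metric.IsCover.coveringNumber_le_encard (C := (C : Set X)) hCA hC

theorem infEDist_le_minimaxErr {F G : Set X} {g : X} (hg : g ∈ G) :
    infEDist g F ≤ minimaxErr G F (fun a b => edist a b) :=
  le_iSup₂_of_le g hg (by simp only [infEDist, edist_comm g]; rfl)

theorem Metric.IsCover.two_mul_of_infEDist_le {r : ℝ≥0} {F G C : Set X} (hC : C.Finite)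
    (hFC : IsCover r F C) (hGF : ∀ g ∈ G, infEDist g F ≤ r) : IsCover (2 * r) G C := by
  intro g hg
  have hF_near_C : ∀ f ∈ F, infEDist f C ≤ r := fun f hf => by
    obtain ⟨c, hc, hfc⟩ := hFC hf
    exact (Metric.infEDist_le_edist_of_mem hc).trans hfc
  have hgC : infEDist g C ≤ 2 * r := calc
    infEDist g C ≤ infEDist g F + r := by
      rw [← tsub_le_iff_right]
      refine Metric.le_infEDist.2 fun f hf => tsub_le_iff_right.2 ?_
      exact Metric.infEDist_le_edist_add_infEDist.trans (add_le_add_right (hF_near_C f hf) _)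
    _ ≤ r + r := add_le_add_left (hGF g hg) _
    _ = 2 * r := by rw [two_mul]
  have hCne : C.Nonempty := by
    rw [Set.nonempty_iff_ne_empty]
    rintro rfl
    simp [ENNReal.mul_eq_top] at hgC
  obtain ⟨c, hc, hgc⟩ := hC.isCompact.exists_infEDist_eq_edist hCne g
  exact ⟨c, hc, by simpa [← hgc] using hgC⟩

theorem Metric.externalCoveringNumber_two_mul_le_of_infEDist_le {r : ℝ≥0} {F G : Set X}
    (h : ∀ g ∈ G, infEDist g F ≤ r) :
    externalCoveringNumber (2 * r) G ≤ externalCoveringNumber r F := by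
  refine le_iInf₂ fun C hC => ?_
  obtain hfin | hinf := C.finite_or_infinite
  · exact (hC.two_mul_of_infEDist_le hfin h).externalCoveringNumber_le_encard
  · simp [hinf.encard_eq]

theorem Metric.coveringNumber_four_mul_le_of_infEDist_le {r : ℝ≥0} {F G : Set X}
    (h : ∀ g ∈ G, infEDist g F ≤ r) :
    Metric.coveringNumber (4 * r) G ≤ Metric.coveringNumber r F := calc
  Metric.coveringNumber (4 * r) G = Metric.coveringNumber (2 * (2 * r)) G := by ring_nf
  _ ≤ externalCoveringNumber (2 * r) G := coveringNumber_two_mul_le_externalCoveringNumber _ _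
  _ ≤ externalCoveringNumber r F := externalCoveringNumber_two_mul_le_of_infEDist_le h
  _ ≤ Metric.coveringNumber r F := externalCoveringNumber_le_coveringNumber _ _

end

theorem covering_of_approximating_class_general {X : Type*} [MetricSpace X]
    (F G : Set X) (ε : ℝ)
    (h : minimaxErr G F (fun a b => edist a b) ≤ ENNReal.ofReal ε) :
    coveringNumber (ENNReal.ofReal (4 * ε)) G (fun a b => edist a b)
      ≤ coveringNumber (ENNReal.ofReal ε) F (fun a b => edist a b) := by
  have h4ε : ENNReal.ofReal (4 * ε) = ((4 * ε.toNNReal : ℝ≥0) : ℝ≥0∞) := by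
    rw [ENNReal.ofReal, Real.toNNReal_mul zero_le_four, Real.toNNReal_ofNat]
  rw [h4ε, ENNReal.ofReal, coveringNumber_edist_eq, coveringNumber_edist_eq]
  exact Metric.coveringNumber_four_mul_le_of_infEDist_le
    fun g hg => (infEDist_le_minimaxErr hg).trans h

/-- If every element of `G` can be approximated by an element of `F` to
within `ε`, then `N(ε, F, δ) ≥ N(4ε, G, δ)`. -/
theorem covering_of_approximating_class {X : Type*} [MetricSpace X]
    (F G : Set X) (ε : ℝ) (hε : 0 < ε)
    (h : minimaxErr G F (fun a b => edist a b) ≤ ENNReal.ofReal ε) :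
    coveringNumber (ENNReal.ofReal (4 * ε)) G (fun a b => edist a b)
      ≤ coveringNumber (ENNReal.ofReal ε) F (fun a b => edist a b) :=
  covering_of_approximating_class_general F G ε h
end
end

section
/- There exists an absolute constant c ∈ ℝ_+ such that for every p ∈ [1,∞] and all W, L ∈ ℕ with W ≥ 2, the minimax error in approximating 1-Lipschitz functions bounded by 1 through ReLU networks with weights bounded by 1 satisfies A(H^1([0,1]), R(1,W,L,1), ‖·‖_{L^p([0,1])}) ≥ min{ 1/8, c · (W² L² log(W))^{−1} }. -/
open MeasureTheory ProbabilityTheory ENNReal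

noncomputable section

/-- `H¹([0,1])`: continuous functions on `[0,1]` bounded by 1 and 1-Lipschitz. -/
def H1 : Set (ℝ → ℝ) :=
  {f | ContinuousOn f (Set.Icc 0 1) ∧ (∀ x ∈ Set.Icc (0 : ℝ) 1, |f x| ≤ 1) ∧
    ∀ x ∈ Set.Icc (0 : ℝ) 1, ∀ y ∈ Set.Icc (0 : ℝ) 1, |f x - f y| ≤ |x - y|}

/-- View a function on `ℝ^1` as a function of one real variable. -/
def toOneVar (g : (Fin 1 → ℝ) → ℝ) : ℝ → ℝ := fun t => g fun _ => t

/-- `R(1,W,L,B)` viewed as a set of functions of one real variable. -/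
def RclassB₁ (W L : ℕ) (B : ℝ) : Set (ℝ → ℝ) := toOneVar '' RclassB 1 W L B

/-- `R(1,W,L)` (no weight-magnitude constraint) viewed as a set of functions of
one real variable. -/
def Rclass₁ (W L : ℕ) : Set (ℝ → ℝ) := toOneVar '' Rclass 1 W L

/-!
Split `[0, 1]` into `N = 8M` cells and attach to each sign pattern `σ ∈ {±1}^N` the 1-Lipschitz
sawtooth `g_σ` whose tooth on cell `i` has height `1 / (2N)` and sign `σ i`; then
`‖g_σ - g_τ‖₁ ≥ d_H(σ, τ) / (4N²)`. Rounding the weights of a network of width `≤ W`, depth `≤ L`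
and weights in `[-1, 1]` to the grid `ℤ / K` moves its realization by at most
`L (W + 1) ^ L / K` on `[0, 1]`, so for `K ≈ N L (W + 1) ^ L` the rounded weights together with
the architecture form a code with `2 ^ O(W² L² log W)` values. If every `g_σ` had a network
approximant within `ε ≈ 1 / N`, patterns whose approximants share a code would lie at Hamming
distance `< N / 8`, so each code would account for at most `17 ^ N / 16 ^ (7N/8) < 2 ^ (5N/8)`
patterns; for `N ≈ W² L² log W` there are too few codes for all `2 ^ N` patterns.
-/

open Finset

def boolSign (b : Bool) : ℝ := if b then 1 else -1

lemma abs_boolSign (b : Bool) : |boolSign b| = 1 := by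
  cases b <;> simp [boolSign]

lemma abs_boolSign_sub_of_ne {a b : Bool} (h : a ≠ b) : |boolSign a - boolSign b| = 2 := by
  revert h; cases a <;> cases b <;> norm_num [boolSign]

def tent (t : ℝ) : ℝ := max 0 (1 / 2 - |t - 1 / 2|)

lemma tent_nonneg (t : ℝ) : 0 ≤ tent t := le_max_left _ _

lemma tent_le_half (t : ℝ) : tent t ≤ 1 / 2 :=
  max_le (by norm_num) (by linarith [abs_nonneg (t - 1 / 2)])

lemma tent_le_self {t : ℝ} (ht : 0 ≤ t) : tent t ≤ t :=
  max_le ht (by linarith [neg_abs_le (t - 1 / 2)])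

lemma tent_le_one_sub {t : ℝ} (ht : t ≤ 1) : tent t ≤ 1 - t :=
  max_le (by linarith) (by linarith [le_abs_self (t - 1 / 2)])

lemma tent_eq_zero_of_nonpos {t : ℝ} (ht : t ≤ 0) : tent t = 0 :=
  max_eq_left (by linarith [neg_le_abs (t - 1 / 2)])

lemma tent_eq_zero_of_one_le {t : ℝ} (ht : 1 ≤ t) : tent t = 0 :=
  max_eq_left (by linarith [le_abs_self (t - 1 / 2)])

lemma quarter_le_tent {t : ℝ} (h₁ : 1 / 4 ≤ t) (h₂ : t ≤ 3 / 4) : 1 / 4 ≤ tent t :=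
  le_max_of_le_right <| by
    have : |t - 1 / 2| ≤ 1 / 4 := abs_le.2 ⟨by linarith, by linarith⟩
    linarith

lemma abs_tent_sub_tent_le (s t : ℝ) : |tent s - tent t| ≤ |s - t| := by
  unfold tent
  rw [max_comm 0, max_comm 0]
  refine (abs_max_sub_max_le_abs _ _ _).trans ?_
  calc |1 / 2 - |s - 1 / 2| - (1 / 2 - |t - 1 / 2|)| = |(|t - 1 / 2| - |s - 1 / 2|)| := by ring_nf
    _ ≤ |t - 1 / 2 - (s - 1 / 2)| := abs_abs_sub_abs_le_abs_sub _ _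
    _ = |s - t| := by rw [abs_sub_comm]; ring_nf

@[fun_prop]
lemma continuous_tent : Continuous tent := by
  unfold tent; fun_prop

section Sawtooth

variable {N : ℕ}

def signedTents (σ : Fin N → Bool) (u : ℝ) : ℝ := ∑ i, boolSign (σ i) * tent (u - i)

lemma signedTents_eq_of_mem_cell (σ : Fin N → Bool) (i : Fin N) {u : ℝ}
    (h₀ : (i : ℝ) ≤ u) (h₁ : u ≤ i + 1) : signedTents σ u = boolSign (σ i) * tent (u - i) := by
  refine Finset.sum_eq_single_of_mem i (mem_univ i) fun j _ hji => ?_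
  rcases lt_or_gt_of_ne (Fin.val_ne_of_ne hji) with hlt | hgt
  · have : (j : ℝ) + 1 ≤ i := by exact_mod_cast hlt
    rw [tent_eq_zero_of_one_le (by linarith), mul_zero]
  · have : (i : ℝ) + 1 ≤ j := by exact_mod_cast hgt
    rw [tent_eq_zero_of_nonpos (by linarith), mul_zero]

lemma exists_mem_cell (hN : 0 < N) {u : ℝ} (h₀ : 0 ≤ u) (h₁ : u ≤ N) :
    ∃ i : Fin N, (i : ℝ) ≤ u ∧ u ≤ i + 1 := by
  rcases lt_or_eq_of_le h₁ with hlt | rfl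
  · have hfloor : ⌊u⌋₊ < N := (Nat.floor_lt h₀).2 hlt
    exact ⟨⟨⌊u⌋₊, hfloor⟩, Nat.floor_le h₀, (Nat.lt_floor_add_one u).le⟩
  · refine ⟨⟨N - 1, by omega⟩, ?_, ?_⟩ <;> simp [Nat.cast_sub (Nat.one_le_iff_ne_zero.2 hN.ne')]

lemma abs_signedTents_sub_le_of_lt (σ : Fin N → Bool) {i j : Fin N} (hij : i < j) {u v : ℝ}
    (hu₀ : (i : ℝ) ≤ u) (hu₁ : u ≤ i + 1) (hv₀ : (j : ℝ) ≤ v) (hv₁ : v ≤ j + 1) :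
    |signedTents σ u - signedTents σ v| ≤ |u - v| := by
  have hij' : (i : ℝ) + 1 ≤ j := by exact_mod_cast hij
  rw [signedTents_eq_of_mem_cell σ i hu₀ hu₁, signedTents_eq_of_mem_cell σ j hv₀ hv₁,
    abs_sub_comm u v, abs_of_nonneg (by linarith : 0 ≤ v - u)]
  -- the teeth vanish at the grid points `i + 1 ≤ j`, which lie between `u` and `v`
  calc _ ≤ |boolSign (σ i) * tent (u - i)| + |boolSign (σ j) * tent (v - j)| := abs_sub _ _
    _ = tent (u - i) + tent (v - j) := by
      rw [abs_mul, abs_mul, abs_boolSign, abs_boolSign, one_mul, one_mul,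
        abs_of_nonneg (tent_nonneg _), abs_of_nonneg (tent_nonneg _)]
    _ ≤ (1 - (u - i)) + (v - j) :=
      add_le_add (tent_le_one_sub (by linarith)) (tent_le_self (by linarith))
    _ ≤ v - u := by linarith

lemma abs_signedTents_sub_le (σ : Fin N → Bool) {u v : ℝ} (hu₀ : 0 ≤ u) (hu₁ : u ≤ N)
    (hv₀ : 0 ≤ v) (hv₁ : v ≤ N) : |signedTents σ u - signedTents σ v| ≤ |u - v| := by
  rcases Nat.eq_zero_or_pos N with rfl | hN
  · simp [signedTents]
  obtain ⟨i, hu⟩ := exists_mem_cell hN hu₀ hu₁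
  obtain ⟨j, hv⟩ := exists_mem_cell hN hv₀ hv₁
  rcases lt_trichotomy i j with hij | rfl | hji
  · exact abs_signedTents_sub_le_of_lt σ hij hu.1 hu.2 hv.1 hv.2
  · rw [signedTents_eq_of_mem_cell σ i hu.1 hu.2, signedTents_eq_of_mem_cell σ i hv.1 hv.2,
      ← mul_sub, abs_mul, abs_boolSign, one_mul]
    simpa using abs_tent_sub_tent_le (u - i) (v - i)
  · rw [abs_sub_comm, abs_sub_comm u]
    exact abs_signedTents_sub_le_of_lt σ hji hv.1 hv.2 hu.1 hu.2

lemma half_le_abs_signedTents_sub {σ τ : Fin N → Bool} {i : Fin N} (h : σ i ≠ τ i) {u : ℝ}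
    (h₀ : (i : ℝ) + 1 / 4 ≤ u) (h₁ : u ≤ i + 3 / 4) :
    1 / 2 ≤ |signedTents σ u - signedTents τ u| := by
  rw [signedTents_eq_of_mem_cell σ i (by linarith) (by linarith),
    signedTents_eq_of_mem_cell τ i (by linarith) (by linarith), ← sub_mul, abs_mul,
    abs_boolSign_sub_of_ne h, abs_of_nonneg (tent_nonneg _)]
  linarith [quarter_le_tent (t := u - i) (by linarith) (by linarith)]

lemma abs_signedTents_le (σ : Fin N → Bool) (u : ℝ) : |signedTents σ u| ≤ N / 2 := by
  calc |signedTents σ u| ≤ ∑ i, |boolSign (σ i) * tent (u - i)| := abs_sum_le_sum_abs _ _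
    _ ≤ ∑ _i : Fin N, (1 / 2 : ℝ) := sum_le_sum fun i _ => by
      rw [abs_mul, abs_boolSign, one_mul, abs_of_nonneg (tent_nonneg _)]
      exact tent_le_half _
    _ = N / 2 := by simp [div_eq_mul_inv]

@[fun_prop]
lemma continuous_signedTents (σ : Fin N → Bool) : Continuous (signedTents σ) := by
  unfold signedTents
  fun_prop

/-- The sawtooth with `N` teeth of height `1 / (2N)` on `[0, 1]`, with signs `σ`. -/
def sawtooth (σ : Fin N → Bool) (x : ℝ) : ℝ := signedTents σ (N * x) / N

@[fun_prop]
lemma continuous_sawtooth (σ : Fin N → Bool) : Continuous (sawtooth σ) := by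
  unfold sawtooth
  fun_prop

lemma sawtooth_mem_H1 (σ : Fin N → Bool) : sawtooth σ ∈ H1 := by
  rcases Nat.eq_zero_or_pos N with rfl | hN
  · exact ⟨(continuous_sawtooth σ).continuousOn, fun x _ => by simp [sawtooth],
      fun x _ y _ => by simp [sawtooth]⟩
  have hN' : (0 : ℝ) < N := by exact_mod_cast hN
  refine ⟨(continuous_sawtooth σ).continuousOn, fun x _ => ?_, fun x hx y hy => ?_⟩
  · rw [sawtooth, abs_div, abs_of_pos hN', div_le_one hN']
    linarith [abs_signedTents_le σ (N * x)]
  · have hbound : ∀ z ∈ Set.Icc (0 : ℝ) 1, 0 ≤ N * z ∧ N * z ≤ N := fun z hz =>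
      ⟨by nlinarith [hz.1], by nlinarith [hz.2]⟩
    rw [sawtooth, sawtooth, ← sub_div, abs_div, abs_of_pos hN', div_le_iff₀ hN']
    calc _ ≤ |N * x - N * y| := abs_signedTents_sub_le σ (hbound x hx).1 (hbound x hx).2
          (hbound y hy).1 (hbound y hy).2
      _ = |x - y| * N := by rw [← mul_sub, abs_mul, abs_of_pos hN', mul_comm]

def toothCore (N : ℕ) (i : ℕ) : Set ℝ := Set.Icc ((i + 1 / 4) / N) ((i + 3 / 4) / N)

lemma inv_two_mul_le_abs_sawtooth_sub (hN : 0 < N) {σ τ : Fin N → Bool} {i : Fin N}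
    (h : σ i ≠ τ i) {x : ℝ} (hx : x ∈ toothCore N i) :
    1 / (2 * N) ≤ |sawtooth σ x - sawtooth τ x| := by
  have hN' : (0 : ℝ) < N := by exact_mod_cast hN
  rw [toothCore, Set.mem_Icc, div_le_iff₀ hN', le_div_iff₀ hN'] at hx
  rw [sawtooth, sawtooth, ← sub_div, abs_div, abs_of_pos hN', div_le_div_iff₀ (by positivity) hN']
  nlinarith [half_le_abs_signedTents_sub h (u := N * x) (by linarith) (by linarith)]

lemma volume_toothCore (hN : 0 < N) (i : ℕ) :
    volume (toothCore N i) = ENNReal.ofReal (1 / (2 * N)) := by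
  rw [toothCore, Real.volume_Icc]
  congr 1
  field_simp
  ring

lemma toothCore_subset_Icc (i : Fin N) : toothCore N i ⊆ Set.Icc 0 1 := by
  intro x ⟨hx₀, hx₁⟩
  have hi : (i : ℝ) + 1 ≤ N := by exact_mod_cast i.isLt
  have hN' : (0 : ℝ) < N := by linarith [(i : ℕ).cast_nonneg (α := ℝ)]
  exact ⟨le_trans (by positivity) hx₀, hx₁.trans ((div_le_one hN').2 (by linarith))⟩

lemma pairwiseDisjoint_toothCore (hN : 0 < N) (s : Set (Fin N)) :
    s.PairwiseDisjoint fun i => toothCore N i := by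
  intro i _ j _ hij
  refine Set.disjoint_left.2 fun x hxi hxj => hij ?_
  have hN' : (0 : ℝ) < N := by exact_mod_cast hN
  simp only [toothCore, Set.mem_Icc, div_le_iff₀ hN', le_div_iff₀ hN'] at hxi hxj
  have h₁ : (i : ℕ) < j + 1 := by exact_mod_cast (by linarith : (i : ℝ) < j + 1)
  have h₂ : (j : ℕ) < i + 1 := by exact_mod_cast (by linarith : (j : ℝ) < i + 1)
  exact Fin.ext (by omega)

lemma ofReal_hammingDist_le_eLpNorm_sawtooth_sub (σ τ : Fin N → Bool) :
    ENNReal.ofReal (hammingDist σ τ / (4 * N ^ 2)) ≤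
      eLpNorm (sawtooth σ - sawtooth τ) 1 (volume.restrict (Set.Icc 0 1)) := by
  rcases Nat.eq_zero_or_pos N with rfl | hN
  · simp
  set Δ := univ.filter fun i => σ i ≠ τ i
  set c := ENNReal.ofReal (1 / (2 * N))
  have hmeas : Measurable fun x => ‖(sawtooth σ - sawtooth τ) x‖ₑ :=
    ((continuous_sawtooth σ).sub (continuous_sawtooth τ)).measurable.enorm
  have hlow : ∀ i ∈ Δ, ∀ x ∈ toothCore N i, c ≤ ‖(sawtooth σ - sawtooth τ) x‖ₑ := by
    intro i hi x hx
    rw [Pi.sub_apply, Real.enorm_eq_ofReal_abs]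
    exact ENNReal.ofReal_le_ofReal
      (inv_two_mul_le_abs_sawtooth_sub hN (mem_filter.1 hi).2 hx)
  calc ENNReal.ofReal (hammingDist σ τ / (4 * N ^ 2)) = ∑ i ∈ Δ, c * volume (toothCore N i) := by
        have hN' : (0 : ℝ) < N := by exact_mod_cast hN
        simp only [volume_toothCore hN, sum_const, nsmul_eq_mul, c]
        rw [← ENNReal.ofReal_mul (by positivity), ← ENNReal.ofReal_natCast,
          ← ENNReal.ofReal_mul (by positivity)]
        congr 1
        rw [show hammingDist σ τ = #Δ from rfl]
        field_simp
        ring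
    _ ≤ ∑ i ∈ Δ, ∫⁻ x in toothCore N i, ‖(sawtooth σ - sawtooth τ) x‖ₑ :=
        sum_le_sum fun i hi => (setLIntegral_const _ c).symm.le.trans
          (setLIntegral_mono hmeas (hlow i hi))
    _ = ∫⁻ x in ⋃ i ∈ Δ, toothCore N i, ‖(sawtooth σ - sawtooth τ) x‖ₑ :=
        (lintegral_biUnion_finset (pairwiseDisjoint_toothCore hN _)
          (fun _ _ => measurableSet_Icc) _).symm
    _ ≤ ∫⁻ x in Set.Icc 0 1, ‖(sawtooth σ - sawtooth τ) x‖ₑ :=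
        lintegral_mono_set (Set.iUnion₂_subset fun i _ => toothCore_subset_Icc i)
    _ = _ := eLpNorm_one_eq_lintegral_enorm.symm

end Sawtooth

section HammingBall

variable {ι : Type*} [Fintype ι] [DecidableEq ι]

lemma sum_pow_card_agree (x : ι → Bool) (q : ℕ) :
    ∑ y : ι → Bool, q ^ #{i | x i = y i} = (q + 1) ^ Fintype.card ι := by
  calc ∑ y : ι → Bool, q ^ #{i | x i = y i}
      = ∑ y : ι → Bool, ∏ i, if x i = y i then q else 1 :=
        sum_congr rfl fun y _ => by rw [prod_ite, prod_const, prod_const_one, mul_one]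
    _ = ∏ i : ι, ∑ b : Bool, if x i = b then q else 1 :=
        (Fintype.prod_sum fun i (b : Bool) => if x i = b then q else 1).symm
    _ = (q + 1) ^ Fintype.card ι := by
        simp only [Fintype.sum_bool]
        rw [← card_univ, ← prod_const]
        exact prod_congr rfl fun i _ => by cases x i <;> simp [add_comm]

-- A Chernoff-type bound, from weighting each `y` by `q ^ #{i | x i = y i}`.
lemma card_hammingDist_lt_mul_pow_le (x : ι → Bool) (D : ℕ) {q : ℕ} (hq : 1 ≤ q) :
    #{y | hammingDist x y < D} * q ^ (Fintype.card ι - D) ≤ (q + 1) ^ Fintype.card ι := by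
  rw [← sum_pow_card_agree x q, ← smul_eq_mul, ← sum_const]
  refine (sum_le_sum fun y hy => Nat.pow_le_pow_right hq ?_).trans
    (sum_le_sum_of_subset (subset_univ _))
  have hagree : #{i | x i = y i} + hammingDist x y = Fintype.card ι :=
    card_filter_add_card_filter_not _
  have := (mem_filter.1 hy).2
  omega

end HammingBall

lemma exists_lt_of_minimaxErr_lt {α : Type*} {G F : Set α} {δ : α → α → ℝ≥0∞} {ε : ℝ≥0∞}
    (h : minimaxErr G F δ < ε) {g : α} (hg : g ∈ G) : ∃ f ∈ F, δ f g < ε := by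
  have := (le_biSup (fun g => ⨅ f ∈ F, δ f g) hg).trans_lt h
  simpa only [iInf_lt_iff, exists_prop] using this

/-- The code of an `ε`-approximant of `g i` determines `i` up to `B` candidates, so if every
`g i` had one there would be at least `card ι / B` codes. -/
theorem le_minimaxErr_of_encoding {α β ι κ : Type*} [Fintype ι] [Fintype κ] [DecidableEq κ]
    {G : Set α} {P : Set β} {φ : β → α} {δ : α → α → ℝ≥0∞} {ε : ℝ≥0∞}
    {g : ι → α} (hg : ∀ i, g i ∈ G) (e : β → κ) (r : ι → ι → Prop) [DecidableRel r] {B : ℕ}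
    (hr : ∀ i j, ∀ a ∈ P, ∀ b ∈ P, δ (φ a) (g i) < ε → δ (φ b) (g j) < ε → e a = e b → r i j)
    (hB : ∀ i, #{j | r i j} ≤ B) (hcard : Fintype.card κ * B < Fintype.card ι) :
    ε ≤ minimaxErr G (φ '' P) δ := by
  by_contra! h
  have happrox : ∀ i, ∃ a ∈ P, δ (φ a) (g i) < ε := fun i => by
    simpa using exists_lt_of_minimaxErr_lt h (hg i)
  choose a haP ha using happrox
  have hfiber : ∀ k ∈ univ.image (e ∘ a), #{i | (e ∘ a) i = k} ≤ B := by
    simp only [mem_image, mem_univ, true_and]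
    rintro _ ⟨i, rfl⟩
    exact (card_le_card fun j hj => by
      simp only [mem_filter, mem_univ, true_and] at hj ⊢
      exact hr i j _ (haP i) _ (haP j) (ha i) (ha j) hj.symm).trans (hB i)
  have := (card_le_mul_card_image univ B hfiber).trans (Nat.mul_le_mul_left B (card_le_univ _))
  rw [card_univ, mul_comm] at this
  exact hcard.not_ge this

lemma abs_sum_mul_sub_sum_mul_le {n : ℕ} {w w' a a' : ℕ → ℝ} {η D M : ℝ}
    (hw : ∀ k < n, |w k| ≤ 1) (hww' : ∀ k < n, |w k - w' k| ≤ η)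
    (haa' : ∀ k < n, |a k - a' k| ≤ D) (ha' : ∀ k < n, |a' k| ≤ M) (hη : 0 ≤ η) :
    |∑ k ∈ range n, w k * a k - ∑ k ∈ range n, w' k * a' k| ≤ n * (D + η * M) := by
  rw [← sum_sub_distrib]
  refine (abs_sum_le_sum_abs _ _).trans ?_
  calc _ ≤ ∑ _k ∈ range n, (D + η * M) := sum_le_sum fun k hk => by
        have hk := mem_range.1 hk
        rw [show w k * a k - w' k * a' k = w k * (a k - a' k) + (w k - w' k) * a' k by ring]
        refine (abs_add_le _ _).trans ?_
        rw [abs_mul, abs_mul, ← one_mul D]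
        exact add_le_add (mul_le_mul (hw k hk) (haa' k hk) (abs_nonneg _) zero_le_one)
          (mul_le_mul (hww' k hk) (ha' k hk) (abs_nonneg _) hη)
    _ = n * (D + η * M) := by rw [sum_const, card_range, nsmul_eq_mul]

lemma one_le_succ_pow (W i : ℕ) : (1 : ℝ) ≤ ((W : ℝ) + 1) ^ i :=
  one_le_pow₀ (by linarith [W.cast_nonneg (α := ℝ)])

namespace ReLUNet

variable {d : ℕ} (Φ : ReLUNet d)

/-! Weights, biases and neuron values are extended by zero to all indices in `ℕ`, so that networks
of the same architecture can be compared entrywise without casts between `Fin` types. -/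

def weight (i j k : ℕ) : ℝ :=
  if h : j < Φ.width (i + 1) ∧ k < Φ.width i then Φ.A i ⟨j, h.1⟩ ⟨k, h.2⟩ else 0

def bias (i j : ℕ) : ℝ := if h : j < Φ.width (i + 1) then Φ.b i ⟨j, h⟩ else 0

def neuron (x : Fin d → ℝ) (i j : ℕ) : ℝ :=
  if h : j < Φ.width i then Φ.forward i (fun k => x (Fin.cast Φ.width_in k)) ⟨j, h⟩ else 0

def act (i : ℕ) (t : ℝ) : ℝ := if i = 0 then t else max t 0

lemma abs_act_le (i : ℕ) (t : ℝ) : |act i t| ≤ |t| := by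
  unfold act
  split_ifs
  · rfl
  · exact abs_max_le_max_abs_abs.trans (by simp)

lemma abs_act_sub_act_le (i : ℕ) (s t : ℝ) : |act i s - act i t| ≤ |s - t| := by
  unfold act
  split_ifs
  · rfl
  · exact abs_max_sub_max_le_abs _ _ _

lemma neuron_zero (x : Fin d → ℝ) (j : ℕ) :
    Φ.neuron x 0 j = if h : j < d then x ⟨j, h⟩ else 0 := by
  have := Φ.width_in
  unfold neuron
  split_ifs <;> first | omega | rfl

lemma neuron_of_width_le (x : Fin d → ℝ) {i j : ℕ} (hj : Φ.width i ≤ j) : Φ.neuron x i j = 0 :=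
  dif_neg (by omega)

lemma neuron_succ (x : Fin d → ℝ) {i j : ℕ} (hj : j < Φ.width (i + 1)) :
    Φ.neuron x (i + 1) j =
      ∑ k ∈ range (Φ.width i), Φ.weight i j k * act i (Φ.neuron x i k) + Φ.bias i j := by
  simp only [neuron, dif_pos hj, forward, layer, bias, weight, act]
  rw [← Fin.sum_univ_eq_sum_range]
  congr 1
  refine sum_congr rfl fun k _ => ?_
  simp [hj, k.isLt]

lemma realization_eq_neuron (x : Fin d → ℝ) : Φ.realization x = Φ.neuron x Φ.depth 0 := by
  have := Φ.width_out
  rw [neuron, dif_pos (by omega)]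
  rfl

variable {W : ℕ} {Φ}

lemma abs_weight_le (hΦ : Φ.magLe 1) {i : ℕ} (hi : i < Φ.depth) (j k : ℕ) :
    |Φ.weight i j k| ≤ 1 := by
  unfold weight
  split_ifs
  · exact (hΦ i hi).1 _ _
  · simp

lemma abs_bias_le (hΦ : Φ.magLe 1) {i : ℕ} (hi : i < Φ.depth) (j : ℕ) : |Φ.bias i j| ≤ 1 := by
  unfold bias
  split_ifs
  · exact (hΦ i hi).2 _
  · simp

theorem abs_neuron_le (hW : Φ.widthLe W) (hΦ : Φ.magLe 1) {x : Fin d → ℝ}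
    (hx : ∀ k, |x k| ≤ 1) : ∀ i ≤ Φ.depth, ∀ j, |Φ.neuron x i j| ≤ ((W : ℝ) + 1) ^ i := by
  intro i
  induction i with
  | zero =>
    intro _ j
    rw [neuron_zero]
    split_ifs <;> simp [hx]
  | succ i ih =>
    intro (hi : i < Φ.depth) j
    by_cases hj : j < Φ.width (i + 1)
    · rw [neuron_succ Φ x hj]
      have hsum : |∑ k ∈ range (Φ.width i), Φ.weight i j k * act i (Φ.neuron x i k)| ≤
          W * ((W : ℝ) + 1) ^ i := by
        refine (abs_sum_le_sum_abs _ _).trans ?_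
        calc _ ≤ ∑ _k ∈ range (Φ.width i), ((W : ℝ) + 1) ^ i := sum_le_sum fun k _ => by
              rw [abs_mul]
              exact (mul_le_mul (abs_weight_le hΦ hi _ _) ((abs_act_le _ _).trans (ih hi.le k))
                (abs_nonneg _) zero_le_one).trans (one_mul _).le
          _ ≤ W * ((W : ℝ) + 1) ^ i := by
              rw [sum_const, card_range, nsmul_eq_mul]
              gcongr
              exact_mod_cast hW i hi.le
      calc _ ≤ W * ((W : ℝ) + 1) ^ i + 1 :=
            (abs_add_le _ _).trans (add_le_add hsum (abs_bias_le hΦ hi j))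
        _ ≤ ((W : ℝ) + 1) ^ (i + 1) := by
            rw [pow_succ]
            nlinarith [one_le_succ_pow W i]
    · rw [neuron_of_width_le Φ x (not_lt.1 hj), abs_zero]
      positivity

theorem abs_neuron_sub_neuron_le {Ψ : ReLUNet d} (hΦW : Φ.widthLe W) (hΦ : Φ.magLe 1)
    (hΨW : Ψ.widthLe W) (hΨ : Ψ.magLe 1) (hdepth : Φ.depth = Ψ.depth)
    (hwidth : ∀ i ≤ Φ.depth, Φ.width i = Ψ.width i) {η : ℝ} (hη : 0 ≤ η)
    (hA : ∀ i < Φ.depth, ∀ j < Φ.width (i + 1), ∀ k < Φ.width i,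
      |Φ.weight i j k - Ψ.weight i j k| ≤ η)
    (hb : ∀ i < Φ.depth, ∀ j < Φ.width (i + 1), |Φ.bias i j - Ψ.bias i j| ≤ η)
    {x : Fin d → ℝ} (hx : ∀ k, |x k| ≤ 1) :
    ∀ i ≤ Φ.depth, ∀ j, |Φ.neuron x i j - Ψ.neuron x i j| ≤ η * i * ((W : ℝ) + 1) ^ i := by
  intro i
  induction i with
  | zero => intro _ j; simp [neuron_zero]
  | succ i ih =>
    intro (hi : i < Φ.depth) j
    by_cases hj : j < Φ.width (i + 1)
    · have hj' : j < Ψ.width (i + 1) := hwidth (i + 1) hi ▸ hj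
      rw [neuron_succ Φ x hj, neuron_succ Ψ x hj', ← hwidth i hi.le,
        add_sub_add_comm]
      have hlayer := abs_sum_mul_sub_sum_mul_le (n := Φ.width i)
        (fun k _ => abs_weight_le hΦ hi j k) (hA i hi j hj)
        (fun k _ => (abs_act_sub_act_le i _ _).trans (ih hi.le k))
        (fun k _ => (abs_act_le i _).trans (abs_neuron_le hΨW hΨ hx i (hdepth ▸ hi.le) k)) hη
      have hn : (Φ.width i : ℝ) ≤ W := by exact_mod_cast hΦW i hi.le
      calc _ ≤ Φ.width i * (η * i * ((W : ℝ) + 1) ^ i + η * ((W : ℝ) + 1) ^ i) + η :=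
            (abs_add_le _ _).trans (add_le_add hlayer (hb i hi j hj))
        _ ≤ W * (η * (i + 1) * ((W : ℝ) + 1) ^ i) + η := by
            gcongr
            exact le_of_eq (by ring)
        _ ≤ η * ↑(i + 1) * ((W : ℝ) + 1) ^ (i + 1) := by
            push_cast
            rw [pow_succ]
            nlinarith [one_le_succ_pow W i, mul_nonneg hη (i.cast_nonneg (α := ℝ))]
    · rw [neuron_of_width_le Φ x (not_lt.1 hj),
        neuron_of_width_le Ψ x (hwidth (i + 1) hi ▸ not_lt.1 hj), sub_zero, abs_zero]
      positivity

@[fun_prop]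
lemma continuous_forward (i : ℕ) (j : Fin (Φ.width i)) :
    Continuous fun y => Φ.forward i y j := by
  induction i with
  | zero => exact continuous_apply j
  | succ i ih =>
    simp only [forward, layer]
    split_ifs <;> fun_prop

@[fun_prop]
lemma continuous_realization : Continuous Φ.realization := by
  unfold realization
  fun_prop

/-- `⌊w K⌋ + K` as an index in `{0, …, 2K}`; the clamping is inactive when `|w| ≤ 1`. -/
def quantize (K : ℕ) (w : ℝ) : Fin (2 * K + 1) := ⟨min (⌊w * K⌋ + K).toNat (2 * K), by omega⟩

lemma abs_sub_lt_of_quantize_eq {K : ℕ} (hK : 0 < K) {w w' : ℝ} (hw : |w| ≤ 1) (hw' : |w'| ≤ 1)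
    (h : quantize K w = quantize K w') : |w - w'| < 1 / K := by
  have hK' : (0 : ℝ) < K := by exact_mod_cast hK
  have hrange : ∀ v : ℝ, |v| ≤ 1 → -(K : ℤ) ≤ ⌊v * K⌋ ∧ ⌊v * K⌋ ≤ K := fun v hv => by
    obtain ⟨hv₀, hv₁⟩ := abs_le.1 hv
    refine ⟨Int.le_floor.2 ?_, Int.floor_le_iff.2 ?_⟩ <;> push_cast <;> nlinarith
  obtain ⟨h₀, h₁⟩ := hrange w hw
  obtain ⟨h₀', h₁'⟩ := hrange w' hw'
  have hfloor : ⌊w * K⌋ = ⌊w' * K⌋ := by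
    have := congrArg Fin.val h
    simp only [quantize] at this
    omega
  have := Int.abs_sub_lt_one_of_floor_eq_floor hfloor
  rw [← sub_mul, abs_mul, abs_of_pos hK'] at this
  rwa [lt_div_iff₀ hK']

abbrev Code (W L K : ℕ) : Type :=
  Fin (L + 1) × (Fin (L + 1) → Fin (W + 1)) × (Fin L → Fin W → Fin W → Fin (2 * K + 1)) ×
    (Fin L → Fin W → Fin (2 * K + 1))

def code (W L K : ℕ) (Φ : ReLUNet d) : Code W L K :=
  (⟨min Φ.depth L, by omega⟩, fun i => ⟨min (Φ.width i) W, by omega⟩,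
    fun i j k => quantize K (Φ.weight i j k), fun i j => quantize K (Φ.bias i j))

lemma card_code (W L K : ℕ) :
    Fintype.card (Code W L K) =
      (L + 1) * ((W + 1) ^ (L + 1) * ((2 * K + 1) ^ (L * (W * W)) * (2 * K + 1) ^ (L * W))) := by
  simp [← pow_mul, mul_comm]

theorem abs_realization_sub_le_of_code_eq {L K : ℕ} (hK : 0 < K) {Ψ : ReLUNet d}
    (hΦW : Φ.widthLe W) (hΦL : Φ.depth ≤ L) (hΦ : Φ.magLe 1)
    (hΨW : Ψ.widthLe W) (hΨL : Ψ.depth ≤ L) (hΨ : Ψ.magLe 1)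
    (h : Φ.code W L K = Ψ.code W L K) {x : Fin d → ℝ} (hx : ∀ k, |x k| ≤ 1) :
    |Φ.realization x - Ψ.realization x| ≤ L * ((W : ℝ) + 1) ^ L / K := by
  simp only [code, Prod.mk.injEq, Fin.mk.injEq] at h
  obtain ⟨hdepth, hwidth, hA, hb⟩ := h
  replace hdepth : Φ.depth = Ψ.depth := by omega
  replace hwidth : ∀ i ≤ Φ.depth, Φ.width i = Ψ.width i := fun i hi => by
    have := congrArg Fin.val (congrFun hwidth ⟨i, by omega⟩)
    simp only at this
    have := hΦW i hi
    have := hΨW i (hdepth ▸ hi)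
    omega
  have hη : (0 : ℝ) ≤ 1 / K := by positivity
  have hneuron := abs_neuron_sub_neuron_le hΦW hΦ hΨW hΨ hdepth hwidth hη
    (fun i hi j hj k hk => (abs_sub_lt_of_quantize_eq hK (abs_weight_le hΦ hi j k)
      (abs_weight_le hΨ (hdepth ▸ hi) j k) (congrFun (congrFun (congrFun hA ⟨i, by omega⟩)
        ⟨j, hj.trans_le (hΦW _ hi)⟩) ⟨k, hk.trans_le (hΦW _ hi.le)⟩)).le)
    (fun i hi j hj => (abs_sub_lt_of_quantize_eq hK (abs_bias_le hΦ hi j)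
      (abs_bias_le hΨ (hdepth ▸ hi) j) (congrFun (congrFun hb ⟨i, by omega⟩)
        ⟨j, hj.trans_le (hΦW _ hi)⟩)).le) hx Φ.depth le_rfl 0
  rw [realization_eq_neuron, realization_eq_neuron, ← hdepth]
  calc _ ≤ 1 / K * Φ.depth * ((W : ℝ) + 1) ^ Φ.depth := hneuron
    _ = Φ.depth * ((W : ℝ) + 1) ^ Φ.depth / K := by ring
    _ ≤ _ := by
      gcongr
      linarith [W.cast_nonneg (α := ℝ)]

end ReLUNet

lemma eLpNorm_one_le_intervalDist {p : ℝ≥0∞} (hp : 1 ≤ p) {f g : ℝ → ℝ} (hf : Continuous f)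
    (hg : Continuous g) :
    eLpNorm (f - g) 1 (volume.restrict (Set.Icc 0 1)) ≤ intervalDist p f g := by
  have : IsProbabilityMeasure (volume.restrict (Set.Icc (0 : ℝ) 1)) := ⟨by simp⟩
  exact eLpNorm_le_eLpNorm_of_exponent_le hp (hf.sub hg).aestronglyMeasurable

lemma eLpNorm_one_le_of_abs_le {f : ℝ → ℝ} {C : ℝ} (h : ∀ x ∈ Set.Icc (0 : ℝ) 1, |f x| ≤ C) :
    eLpNorm f 1 (volume.restrict (Set.Icc 0 1)) ≤ ENNReal.ofReal C := by
  have hae : ∀ᵐ x ∂(volume.restrict (Set.Icc (0 : ℝ) 1)), ‖f x‖ ≤ C :=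
    (ae_restrict_iff' measurableSet_Icc).2 (ae_of_all _ h)
  simpa using eLpNorm_le_of_ae_bound (p := 1) hae

lemma hammingDist_div_lt_of_approx {N : ℕ} {σ τ : Fin N → Bool} {f g : ℝ → ℝ}
    (hf : Continuous f) (hg : Continuous g) {p : ℝ≥0∞} (hp : 1 ≤ p) {ε η : ℝ}
    (hfg : ∀ t ∈ Set.Icc (0 : ℝ) 1, |f t - g t| ≤ η)
    (hσ : intervalDist p f (sawtooth σ) < ENNReal.ofReal ε)
    (hτ : intervalDist p g (sawtooth τ) < ENNReal.ofReal ε) :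
    hammingDist σ τ / (4 * N ^ 2) < 2 * ε + η := by
  have hε : 0 < ε := ENNReal.ofReal_pos.1 (pos_of_gt hσ)
  have hη : 0 ≤ η := (abs_nonneg _).trans (hfg 0 (by simp))
  have hσ' := (eLpNorm_one_le_intervalDist hp hf (continuous_sawtooth σ)).trans_lt hσ
  have hτ' := (eLpNorm_one_le_intervalDist hp hg (continuous_sawtooth τ)).trans_lt hτ
  rw [eLpNorm_sub_comm] at hσ'
  have htri : sawtooth σ - sawtooth τ = (sawtooth σ - f) + ((f - g) + (g - sawtooth τ)) := by
    abel
  have hsum := calc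
    ENNReal.ofReal (hammingDist σ τ / (4 * N ^ 2))
      ≤ eLpNorm (sawtooth σ - sawtooth τ) 1 (volume.restrict (Set.Icc 0 1)) :=
        ofReal_hammingDist_le_eLpNorm_sawtooth_sub σ τ
    _ ≤ eLpNorm (sawtooth σ - f) 1 (volume.restrict (Set.Icc 0 1)) +
          (eLpNorm (f - g) 1 (volume.restrict (Set.Icc 0 1)) +
            eLpNorm (g - sawtooth τ) 1 (volume.restrict (Set.Icc 0 1))) := by
        rw [htri]
        refine (eLpNorm_add_le (by fun_prop) (by fun_prop) le_rfl).trans (add_le_add le_rfl ?_)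
        exact eLpNorm_add_le (by fun_prop) (by fun_prop) le_rfl
    _ < ENNReal.ofReal ε + (ENNReal.ofReal η + ENNReal.ofReal ε) :=
        have hfg' := eLpNorm_one_le_of_abs_le hfg
        ENNReal.add_lt_add hσ' (ENNReal.add_lt_add_of_le_of_lt (ne_top_of_le_ne_top (by simp) hfg')
          hfg' hτ')
    _ = ENNReal.ofReal (2 * ε + η) := by
        rw [← ENNReal.ofReal_add hη hε.le, ← ENNReal.ofReal_add hε.le (by positivity)]
        ring_nf
  exact (ENNReal.ofReal_lt_ofReal_iff'.1 hsum).1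

lemma RclassB₁_eq_image (W L : ℕ) (B : ℝ) :
    RclassB₁ W L B = (fun Φ : ReLUNet 1 => toOneVar Φ.realization) ''
      {Φ | Φ.widthLe W ∧ Φ.depth ≤ L ∧ Φ.magLe B} := by
  ext f
  simp only [RclassB₁, RclassB, Set.mem_image, Set.mem_ofPred_eq]
  constructor
  · rintro ⟨_, ⟨Φ, hW, hL, hB, rfl⟩, rfl⟩
    exact ⟨Φ, ⟨hW, hL, hB⟩, rfl⟩
  · rintro ⟨Φ, ⟨hW, hL, hB⟩, rfl⟩
    exact ⟨_, ⟨Φ, hW, hL, hB, rfl⟩, rfl⟩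

lemma two_pow_mul_div_lt {M : ℕ} (hM : 0 < M) :
    2 ^ (3 * M) * (17 ^ (8 * M) / 16 ^ (7 * M)) < 2 ^ (8 * M) := by
  have h17 : 17 ^ (8 * M) < 2 ^ (5 * M) * 16 ^ (7 * M) := calc
    17 ^ (8 * M) = (17 ^ 8) ^ M := pow_mul _ _ _
    _ < (2 ^ 33) ^ M := Nat.pow_lt_pow_left (by norm_num) hM.ne'
    _ = 2 ^ (5 * M) * 16 ^ (7 * M) := by
      rw [← pow_mul, show 16 = 2 ^ 4 by rfl, ← pow_mul, ← pow_add]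
      ring_nf
  calc 2 ^ (3 * M) * (17 ^ (8 * M) / 16 ^ (7 * M)) < 2 ^ (3 * M) * 2 ^ (5 * M) :=
        Nat.mul_lt_mul_of_pos_left ((Nat.div_lt_iff_lt_mul (by positivity)).2 h17)
          (by positivity)
    _ = 2 ^ (8 * M) := by rw [← pow_add]; ring_nf

lemma hammingDist_lt_of_code_eq {W L M K : ℕ} (hM : 0 < M) (hK : 2 ^ 9 * M * L * (W + 1) ^ L ≤ K)
    (hK₀ : 0 < K) {p : ℝ≥0∞} (hp : 1 ≤ p) {σ τ : Fin (8 * M) → Bool} {Φ Ψ : ReLUNet 1}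
    (hΦ : Φ.widthLe W ∧ Φ.depth ≤ L ∧ Φ.magLe 1) (hΨ : Ψ.widthLe W ∧ Ψ.depth ≤ L ∧ Ψ.magLe 1)
    (hσ : intervalDist p (toOneVar Φ.realization) (sawtooth σ) < ENNReal.ofReal (1 / (2 ^ 10 * M)))
    (hτ : intervalDist p (toOneVar Ψ.realization) (sawtooth τ) < ENNReal.ofReal (1 / (2 ^ 10 * M)))
    (hcode : Φ.code W L K = Ψ.code W L K) : hammingDist σ τ < M := by
  have hM' : (0 : ℝ) < M := by exact_mod_cast hM
  have hη : L * ((W : ℝ) + 1) ^ L / K ≤ 1 / (2 ^ 9 * M) := by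
    rw [div_le_div_iff₀ (by exact_mod_cast hK₀) (by positivity)]
    have : (2 ^ 9 * M * L * (W + 1) ^ L : ℝ) ≤ K := by exact_mod_cast hK
    linarith
  have hclose : ∀ t ∈ Set.Icc (0 : ℝ) 1,
      |toOneVar Φ.realization t - toOneVar Ψ.realization t| ≤ L * ((W : ℝ) + 1) ^ L / K :=
    fun t ht => ReLUNet.abs_realization_sub_le_of_code_eq hK₀ hΦ.1 hΦ.2.1 hΦ.2.2 hΨ.1 hΨ.2.1
      hΨ.2.2 hcode fun _ => abs_le.2 ⟨by linarith [ht.1], ht.2⟩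
  have hdist := hammingDist_div_lt_of_approx (by unfold toOneVar; fun_prop)
    (by unfold toOneVar; fun_prop) hp hclose hσ hτ
  rw [div_lt_iff₀ (by positivity)] at hdist
  have : (hammingDist σ τ : ℝ) < M := calc
    _ < _ := hdist
    _ ≤ (2 * (1 / (2 ^ 10 * M)) + 1 / (2 ^ 9 * M)) * (4 * ((8 * M : ℕ) : ℝ) ^ 2) := by gcongr
    _ = M := by push_cast; field_simp; ring
  exact_mod_cast this

theorem le_minimaxErr_of_card_code_le {W L M K : ℕ} (hL : 0 < L) (hM : 0 < M)
    (hK : 2 ^ 9 * M * L * (W + 1) ^ L ≤ K) (hcard : Fintype.card (ReLUNet.Code W L K) ≤ 2 ^ (3 * M))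
    {p : ℝ≥0∞} (hp : 1 ≤ p) :
    ENNReal.ofReal (1 / (2 ^ 10 * M)) ≤ minimaxErr H1 (RclassB₁ W L 1) (intervalDist p) := by
  have hK₀ : 0 < K := lt_of_lt_of_le (by positivity) hK
  rw [RclassB₁_eq_image]
  refine le_minimaxErr_of_encoding (ι := Fin (8 * M) → Bool) sawtooth_mem_H1 (ReLUNet.code W L K)
    (fun σ τ => hammingDist σ τ < M) (B := 17 ^ (8 * M) / 16 ^ (7 * M))
    (fun σ τ Φ hΦ Ψ hΨ => hammingDist_lt_of_code_eq hM hK hK₀ hp hΦ hΨ) (fun σ => ?_) ?_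
  · rw [Nat.le_div_iff_mul_le (by positivity)]
    simpa [show 8 * M - M = 7 * M by omega] using
      card_hammingDist_lt_mul_pow_le σ M (q := 16) (by norm_num)
  · simp only [Fintype.card_fun, Fintype.card_bool, Fintype.card_fin]
    exact (Nat.mul_le_mul_right _ hcard).trans_lt (two_pow_mul_div_lt hM)

lemma mul_succ_pow_le_two_pow {W L l : ℕ} (hW : W + 1 ≤ 2 ^ (l + 1)) :
    2 ^ 9 * (32 * (W ^ 2 * L ^ 2 * l)) * L * (W + 1) ^ L ≤ 2 ^ (16 + 3 * l + 4 * L + l * L) := by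
  have hW' : W ≤ 2 ^ (l + 1) := by omega
  have hL : L ≤ 2 ^ L := Nat.lt_two_pow_self.le
  have hl : l ≤ 2 ^ l := Nat.lt_two_pow_self.le
  calc 2 ^ 9 * (32 * (W ^ 2 * L ^ 2 * l)) * L * (W + 1) ^ L
      = 2 ^ 14 * W ^ 2 * L ^ 3 * l * (W + 1) ^ L := by ring
    _ ≤ 2 ^ 14 * (2 ^ (l + 1)) ^ 2 * (2 ^ L) ^ 3 * 2 ^ l * (2 ^ (l + 1)) ^ L := by gcongr
    _ = 2 ^ (16 + 3 * l + 4 * L + l * L) := by ring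

lemma card_code_le {W L l : ℕ} (hW : W + 1 ≤ 2 ^ (l + 1)) (hW₁ : 1 ≤ W) (hL : 1 ≤ L)
    (hl : 1 ≤ l) :
    Fintype.card (ReLUNet.Code W L (2 ^ (16 + 3 * l + 4 * L + l * L))) ≤
      2 ^ (3 * (32 * (W ^ 2 * L ^ 2 * l))) := by
  set k := 16 + 3 * l + 4 * L + l * L
  have hK : ∀ n, 2 * 2 ^ n + 1 ≤ 2 ^ (n + 2) := fun n => by
    have := Nat.one_le_two_pow (n := n)
    rw [pow_succ, pow_succ]
    omega
  have hL' : L + 1 ≤ 2 ^ L := Nat.lt_two_pow_self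
  rw [ReLUNet.card_code]
  calc _ ≤ 2 ^ L * ((2 ^ (l + 1)) ^ (L + 1) *
        ((2 ^ (k + 2)) ^ (L * (W * W)) * (2 ^ (k + 2)) ^ (L * W))) := by gcongr <;> exact hK k
    _ = 2 ^ (L + ((l + 1) * (L + 1) + ((k + 2) * (L * (W * W)) + (k + 2) * (L * W)))) := by
      simp only [← pow_mul, ← pow_add]
    _ ≤ 2 ^ (3 * (32 * (W ^ 2 * L ^ 2 * l))) := by
      refine Nat.pow_le_pow_right (by norm_num) ?_
      have hlL : 1 ≤ l * L := Nat.mul_le_mul hl hL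
      have hk : k + 2 ≤ 26 * (l * L) := by
        have := Nat.le_mul_of_pos_right l hL
        have := Nat.le_mul_of_pos_left L hl
        omega
      have hWW : L * W ≤ L * (W * W) := Nat.mul_le_mul_left L (Nat.le_mul_self W)
      have hWL : l * L ≤ l * L * (L * (W * W)) := Nat.le_mul_of_pos_right _ (by positivity)
      have hprod := Nat.mul_le_mul_right (L * (W * W)) hk
      have ha : W ^ 2 * L ^ 2 * l = l * L * (L * (W * W)) := by ring
      rw [ha]
      nlinarith

/-- Lower bound on the minimax error in approximating 1-Lipschitz
functions by deep ReLU networks with weights bounded by 1: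
`A(H¹([0,1]), R(1,W,L,1), ‖·‖_{L^p([0,1])}) ≥ min{1/8, c (W²L² log W)⁻¹}`. -/
theorem lipschitz_approximation_lower_bound :
    ∃ c : ℝ, 0 < c ∧
      ∀ (W L : ℕ) (p : ℝ≥0∞),
        2 ≤ W → 0 < L → 1 ≤ p →
        ENNReal.ofReal
            (min (1 / 8) (c * ((W : ℝ) ^ 2 * (L : ℝ) ^ 2 * Real.logb 2 (W : ℝ))⁻¹))
          ≤ minimaxErr H1 (RclassB₁ W L 1) (intervalDist p) := by
  refine ⟨2⁻¹ ^ 15, by positivity, fun W L p hW hL hp => ?_⟩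
  set l := Nat.log 2 W
  have hl : 1 ≤ l := Nat.log_pos one_lt_two hW
  have hWl : W + 1 ≤ 2 ^ (l + 1) := Nat.lt_pow_succ_log_self one_lt_two W
  refine le_trans (ENNReal.ofReal_le_ofReal (min_le_of_right_le ?_))
    (le_minimaxErr_of_card_code_le hL (by positivity) (mul_succ_pow_le_two_pow hWl)
      (card_code_le hWl (by omega) hL hl) hp)
  have hlog : (l : ℝ) ≤ Real.logb 2 W := by exact_mod_cast Real.natLog_le_logb W 2
  rw [show (1 : ℝ) / (2 ^ 10 * ((32 * (W ^ 2 * L ^ 2 * l) : ℕ) : ℝ)) =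
    2⁻¹ ^ 15 * ((W : ℝ) ^ 2 * L ^ 2 * l)⁻¹ by push_cast; field_simp; norm_num]
  gcongr
end
end

section
/- Let U, V ∈ ℕ. For each j = 1,…,U, let (Z_{j,i})_{i=1}^V be i.i.d. nonnegative random variables with mean μ_j and taking values in [0,1] almost surely (no independence is assumed across different j). Then E( sup_{j=1,…,U} ( μ_j − (2/V) Σ_{i=1}^V Z_{j,i} ) ) ≤ 8 log(U)/V. -/
/-!
Put `λ = V / 2`. For each row, `λ (μ_j - (2/V) ∑_i Z_{j,i}) = λ μ_j - ∑_i Z_{j,i}` has exponential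
moment at most `1`: by convexity of `exp`, a `[0,1]`-valued `Z` with mean `m` has
`E e^{-Z} ≤ 1 - (1 - e⁻¹) m ≤ e^{-m/2}`, and independence multiplies these bounds over the row.
The tangent-line bound `x ≤ log U - 1 + eˣ / U` then gives
`E sup_j Y_j ≤ log U - 1 + (1/U) ∑_j E e^{Y_j} ≤ log U` for such `Y_j`, so the expected supremum
is at most `2 log U / V`, and `log U ≤ log₂ U`.
-/

open MeasureTheory ProbabilityTheory Real

lemma Real.exp_mul_le_one_add_exp_sub_one_mul (t : ℝ) {x : ℝ} (hx : x ∈ Set.Icc (0 : ℝ) 1) :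
    exp (t * x) ≤ 1 + (exp t - 1) * x := by
  have h := convexOn_exp.2 (Set.mem_univ t) (Set.mem_univ 0) hx.1 (sub_nonneg.2 hx.2)
    (add_sub_cancel x 1)
  simp only [smul_eq_mul, mul_zero, add_zero, exp_zero] at h
  rw [mul_comm t x]
  linarith

lemma Real.iSup_le_log_card_sub_one_add_sum_exp_div {ι : Type*} [Fintype ι] [Nonempty ι]
    (y : ι → ℝ) :
    ⨆ j, y j ≤ log (Fintype.card ι) - 1 + (∑ j, exp (y j)) / Fintype.card ι := by
  have hcard : (0 : ℝ) < Fintype.card ι := by exact_mod_cast Fintype.card_pos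
  refine ciSup_le fun j ↦ ?_
  have htangent := add_one_le_exp (y j - log (Fintype.card ι))
  rw [exp_sub, exp_log hcard] at htangent
  have hsingle : exp (y j) ≤ ∑ k, exp (y k) :=
    Finset.single_le_sum (fun k _ ↦ (exp_pos (y k)).le) (Finset.mem_univ j)
  have := div_le_div_of_nonneg_right hsingle hcard.le
  linarith

namespace ProbabilityTheory

variable {Ω : Type*} {m : MeasurableSpace Ω} {P : Measure Ω}

lemma integrable_exp_const_sub_sum [IsFiniteMeasure P] {ι : Type*} {X : ι → Ω → ℝ}
    (hmeas : ∀ i, AEMeasurable (X i) P) (hnonneg : ∀ i, 0 ≤ᵐ[P] X i) (c : ℝ) (s : Finset ι) :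
    Integrable (fun ω ↦ exp (c - ∑ i ∈ s, X i ω)) P := by
  refine .of_mem_Icc 0 (exp c) (by fun_prop) ?_
  filter_upwards [(Filter.eventually_all_finset s).2 fun i _ ↦ hnonneg i] with ω hω
  exact ⟨(exp_pos _).le, exp_le_exp.2 (sub_le_self c (Finset.sum_nonneg hω))⟩

variable [IsProbabilityMeasure P]

lemma mgf_le_exp_of_mem_Icc_zero_one {X : Ω → ℝ} (hX : AEMeasurable X P)
    (hb : ∀ᵐ ω ∂P, X ω ∈ Set.Icc (0 : ℝ) 1) (t : ℝ) :
    mgf X P t ≤ exp ((exp t - 1) * P[X]) :=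
  calc mgf X P t ≤ ∫ ω, (1 + (exp t - 1) * X ω) ∂P :=
        integral_mono_ae (integrable_exp_mul_of_mem_Icc hX hb)
          ((integrable_const 1).add ((Integrable.of_mem_Icc 0 1 hX hb).const_mul _))
          (hb.mono fun _ ↦ exp_mul_le_one_add_exp_sub_one_mul t)
    _ = 1 + (exp t - 1) * P[X] := by
        rw [integral_add (integrable_const 1) ((Integrable.of_mem_Icc 0 1 hX hb).const_mul _),
          integral_const_mul]
        simp
    _ ≤ exp ((exp t - 1) * P[X]) := by linarith [add_one_le_exp ((exp t - 1) * P[X])]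

lemma iIndepFun.mgf_sum_le_exp_of_mem_Icc_zero_one {ι : Type*} {X : ι → Ω → ℝ}
    (hindep : iIndepFun X P) (hmeas : ∀ i, AEMeasurable (X i) P)
    (hb : ∀ i, ∀ᵐ ω ∂P, X i ω ∈ Set.Icc (0 : ℝ) 1) (s : Finset ι) (t : ℝ) :
    mgf (∑ i ∈ s, X i) P t ≤ exp ((exp t - 1) * ∑ i ∈ s, P[X i]) := by
  rw [hindep.mgf_sum₀ hmeas, Finset.mul_sum, exp_sum]
  exact Finset.prod_le_prod (fun _ _ ↦ mgf_nonneg)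
    fun i _ ↦ mgf_le_exp_of_mem_Icc_zero_one (hmeas i) (hb i) t

lemma iIndepFun.integral_exp_half_sum_integral_sub_sum_le_one {ι : Type*} {X : ι → Ω → ℝ}
    (hindep : iIndepFun X P) (hmeas : ∀ i, AEMeasurable (X i) P)
    (hb : ∀ i, ∀ᵐ ω ∂P, X i ω ∈ Set.Icc (0 : ℝ) 1) (s : Finset ι) :
    ∫ ω, exp ((∑ i ∈ s, P[X i]) / 2 - ∑ i ∈ s, X i ω) ∂P ≤ 1 := by
  set m := ∑ i ∈ s, P[X i]
  have hm : 0 ≤ m := Finset.sum_nonneg fun i _ ↦ integral_nonneg_of_ae ((hb i).mono fun _ h ↦ h.1)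
  have hmgf := hindep.mgf_sum_le_exp_of_mem_Icc_zero_one hmeas hb s (-1)
  calc ∫ ω, exp (m / 2 - ∑ i ∈ s, X i ω) ∂P = exp (m / 2) * mgf (∑ i ∈ s, X i) P (-1) := by
        rw [mgf, ← integral_const_mul]
        simp only [Finset.sum_apply, ← exp_add]
        ring_nf
    _ ≤ exp (m / 2) * exp ((exp (-1) - 1) * m) := by gcongr
    _ ≤ exp (m / 2) * exp (-(m / 2)) := by
        gcongr
        nlinarith [exp_neg_one_lt_half]
    _ = 1 := by rw [← exp_add, add_neg_cancel, exp_zero]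

lemma integral_iSup_le_log_card {ι : Type*} [Fintype ι] [Nonempty ι] {Y : ι → Ω → ℝ}
    (hint : ∀ j, Integrable (fun ω ↦ exp (Y j ω)) P) (hexp : ∀ j, ∫ ω, exp (Y j ω) ∂P ≤ 1) :
    ∫ ω, ⨆ j, Y j ω ∂P ≤ log (Fintype.card ι) := by
  set n : ℝ := (Fintype.card ι : ℝ)
  have hn : 1 ≤ n := Nat.one_le_cast.2 Fintype.card_pos
  by_cases hsup : Integrable (fun ω ↦ ⨆ j, Y j ω) P
  swap
  · rw [integral_undef hsup]
    exact log_nonneg hn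
  have hsum : Integrable (fun ω ↦ ∑ j, exp (Y j ω)) P := integrable_finsetSum _ fun j _ ↦ hint j
  calc ∫ ω, ⨆ j, Y j ω ∂P ≤ ∫ ω, (log n - 1 + (∑ j, exp (Y j ω)) / n) ∂P :=
        integral_mono hsup ((integrable_const _).add (hsum.div_const n))
          fun ω ↦ iSup_le_log_card_sub_one_add_sum_exp_div fun j ↦ Y j ω
    _ = log n - 1 + (∑ j, ∫ ω, exp (Y j ω) ∂P) / n := by
        rw [integral_add (integrable_const _) (hsum.div_const n), integral_div,
          integral_finsetSum _ fun j _ ↦ hint j]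
        simp
    _ ≤ log n - 1 + (∑ _j : ι, (1 : ℝ)) / n := by gcongr with j; exact hexp j
    _ = log n := by simp [n, (by positivity : n ≠ 0)]

end ProbabilityTheory

lemma Real.log_le_logb_two {x : ℝ} (hx : 1 ≤ x) : log x ≤ logb 2 x := by
  rw [← log_div_log]
  exact le_div_self (log_nonneg hx) (log_pos one_lt_two) (by linarith [log_two_lt_d9])

theorem expected_sup_recentered_averages_general
    (U V : ℕ) (hU : 0 < U) (hV : 0 < V)
    (Ω : Type*) [MeasureSpace Ω] [IsProbabilityMeasure (ℙ : Measure Ω)]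
    (Z : Fin U → Fin V → Ω → ℝ) (μ : Fin U → ℝ)
    (hmeas : ∀ j i, Measurable (Z j i))
    (hindep : ∀ j, iIndepFun (Z j) ℙ)
    (hbound : ∀ j i, ∀ᵐ ω ∂ℙ, Z j i ω ∈ Set.Icc (0 : ℝ) 1)
    (hmean : ∀ j i, ∫ ω, Z j i ω ∂ℙ = μ j) :
    ∫ ω, (⨆ j, (μ j - (2 / (V : ℝ)) * ∑ i, Z j i ω)) ∂ℙ
      ≤ 8 * Real.logb 2 (U : ℝ) / (V : ℝ) := by
  have : Nonempty (Fin U) := ⟨⟨0, hU⟩⟩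
  have hVpos : (0 : ℝ) < V := Nat.cast_pos.2 hV
  set Y : Fin U → Ω → ℝ := fun j ω ↦ (∑ i, ∫ ω, Z j i ω) / 2 - ∑ i, Z j i ω
  have hY : ∀ ω, (V / 2 : ℝ) * ⨆ j, (μ j - (2 / (V : ℝ)) * ∑ i, Z j i ω) = ⨆ j, Y j ω := by
    intro ω
    rw [mul_iSup_of_nonneg (by positivity)]
    congr! 1 with j
    simp only [Y, hmean, Finset.sum_const, Finset.card_univ, Fintype.card_fin, nsmul_eq_mul]
    field_simp
  have hexpY (j : Fin U) : Integrable (fun ω ↦ exp (Y j ω)) ℙ :=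
    integrable_exp_const_sub_sum (fun i ↦ (hmeas j i).aemeasurable)
      (fun i ↦ (hbound j i).mono fun _ h ↦ h.1) _ _
  have hmax : (V / 2 : ℝ) * ∫ ω, ⨆ j, (μ j - (2 / (V : ℝ)) * ∑ i, Z j i ω) ≤ log U := by
    simp only [← integral_const_mul, hY]
    simpa using integral_iSup_le_log_card hexpY fun j ↦
      (hindep j).integral_exp_half_sum_integral_sub_sum_le_one
        (fun i ↦ (hmeas j i).aemeasurable) (hbound j) _
  calc ∫ ω, (⨆ j, (μ j - (2 / (V : ℝ)) * ∑ i, Z j i ω)) ≤ 2 * log U / V := by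
        rw [le_div_iff₀ hVpos]; linarith
    _ ≤ 8 * logb 2 U / V := by
        gcongr
        · norm_num
        · exact log_le_logb_two (Nat.one_le_cast.2 hU)

/-- For rows of i.i.d. `[0,1]`-valued random variables `(Z_{j,i})_{i=1}^V`
with means `μ_j`, the expected supremum of the recentered averages satisfies
`E(sup_j (μ_j − (2/V)Σ_i Z_{j,i})) ≤ 8 log(U)/V`. -/
theorem expected_sup_recentered_averages
    (U V : ℕ) (hU : 0 < U) (hV : 0 < V)
    (Ω : Type*) [MeasureSpace Ω] [IsProbabilityMeasure (ℙ : Measure Ω)]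
    (Z : Fin U → Fin V → Ω → ℝ) (μ : Fin U → ℝ)
    (hmeas : ∀ j i, Measurable (Z j i))
    (hindep : ∀ j, iIndepFun (Z j) ℙ)
    (hident : ∀ j i i', Measure.map (Z j i) ℙ = Measure.map (Z j i') ℙ)
    (hbound : ∀ j i, ∀ᵐ ω ∂ℙ, Z j i ω ∈ Set.Icc (0 : ℝ) 1)
    (hmean : ∀ j i, ∫ ω, Z j i ω ∂ℙ = μ j) :
    ∫ ω, (⨆ j, (μ j - (2 / (V : ℝ)) * ∑ i, Z j i ω)) ∂ℙ
      ≤ 8 * Real.logb 2 (U : ℝ) / (V : ℝ) :=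
  expected_sup_recentered_averages_general U V hU hV Ω Z μ hmeas hindep hbound hmean
end
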